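/- arXiv:1702.08748 — 4 statements merged into one kernel-verified Lean document; each statement's English description precedes it below -/
import Mathlib

section
/- Let d ≥ 1 and let μ be a translation-invariant probability measure on configurations on ℤ^{d+1}. If ∑_{r≥1} r^d · μ(rad_0(H_0) > r) < ∞, where 0 denotes the origin of 𝕃, then μ-almost surely all of the following hold: (i) for every u ∈ 𝕃 both depths l_u^+(M_u) and l_u^−(M_u) are finite (so F_+(u) and F_−(u) are finite integers, i.e. the two-sided Lipschitz surface exists); (ii) for every u = (b,0) ∈ 𝕃 the sites (b, F_+(u)) and (b, F_−(u)) are open; (iii) for all u, u' ∈ 𝕃 with ‖u−u'‖₁ = 1 one has |F_+(u) − F_+(u')| ≤ 1 and |F_−(u) − F_−(u')| ≤ 1. -/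
open MeasureTheory
open scoped ENNReal

noncomputable section

/-- A site of `ℤ^{d+1}`: a base in `ℤ^d` and a height in `ℤ`. -/
abbrev Site (d : ℕ) := (Fin d → ℤ) × ℤ

/-- `Sign(x)`: `{1}` if `x > 0`, `{-1}` if `x < 0`, `{-1, 1}` if `x = 0`. -/
def signSet (x : ℤ) : Set ℤ := if 0 < x then {1} else if x < 0 then {-1} else {-1, 1}

/-- `ℓ¹`-distance between two bases. -/
def l1 {d : ℕ} (b b' : Fin d → ℤ) : ℤ := ∑ j, |b j - b' j|

/-- `ℓ¹`-distance between two sites. -/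
def dist1 {d : ℕ} (u v : Site d) : ℤ := l1 u.1 v.1 + |u.2 - v.2|

/-- A single move of a d-path: either a vertical move into a closed site,
or a diagonal move towards the zero-height hyperplane. -/
def DStep {d : ℕ} (ω : Site d → Bool) (p q : Site d) : Prop :=
  (q.1 = p.1 ∧ (q.2 - p.2) ∈ signSet p.2 ∧ ω q = true) ∨
  (l1 q.1 p.1 = 1 ∧ (p.2 - q.2) ∈ signSet p.2 ∧ p.2 ≠ 0)

/-- There is a d-path from `u` (a closed site of the zero-height hyperplane) to `v`. -/
def IsDPath {d : ℕ} (ω : Site d → Bool) (u v : Site d) : Prop :=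
  u.2 = 0 ∧ ω u = true ∧
  ∃ (k : ℕ) (p : Fin (k + 1) → Site d), Function.Injective p ∧
    p 0 = u ∧ p (Fin.last k) = v ∧
    ∀ i : Fin k, DStep ω (p i.castSucc) (p i.succ)

/-- `hat v`: sites with the same base as `v` but further from the zero-height hyperplane. -/
def hatSet {d : ℕ} (v : Site d) : Set (Site d) :=
  {w | w.1 = v.1 ∧ 0 ≤ v.2 * w.2 ∧ |v.2| ≤ |w.2|}

/-- `u ↣ v`: there is a d-path from `u` to some site of `hat v`. -/
def reaches {d : ℕ} (ω : Site d → Bool) (u v : Site d) : Prop :=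
  ∃ w ∈ hatSet v, IsDPath ω u w

/-- The hill around `u`. -/
def hill {d : ℕ} (ω : Site d → Bool) (u : Site d) : Set (Site d) := {v | reaches ω u v}

/-- The mountain around `v`: the union of all hills (around sites of the zero-height
hyperplane) containing `v`. -/
def mountain {d : ℕ} (ω : Site d → Bool) (v : Site d) : Set (Site d) :=
  {w | ∃ u : Site d, u.2 = 0 ∧ v ∈ hill ω u ∧ w ∈ hill ω u}

/-- Positive depth `l_u^+(S)`. -/
def depthPlus {d : ℕ} (u : Site d) (S : Set (Site d)) : ℕ∞ :=
  ⨆ k ∈ {k : ℕ | ((u.1, u.2 + (k : ℤ)) : Site d) ∈ S}, (k : ℕ∞)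

/-- Negative depth `l_u^-(S)`. -/
def depthMinus {d : ℕ} (u : Site d) (S : Set (Site d)) : ℕ∞ :=
  ⨆ k ∈ {k : ℕ | ((u.1, u.2 - (k : ℤ)) : Site d) ∈ S}, (k : ℕ∞)

/-- Radius `rad_u(S) = sup {‖v - u‖₁ : v ∈ S}`, valued in `ℝ≥0∞`. -/
def radius {d : ℕ} (u : Site d) (S : Set (Site d)) : ℝ≥0∞ :=
  ⨆ v ∈ S, ((dist1 u v).toNat : ℝ≥0∞)

open Classical in
/-- `F₊(b) = 1 + l_{(b,0)}^+(M_{(b,0)})` if the mountain is nonempty, `0` otherwise. -/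
def Fplus {d : ℕ} (ω : Site d → Bool) (b : Fin d → ℤ) : ℤ :=
  if (mountain ω (b, 0)).Nonempty then
    1 + ((depthPlus ((b, 0) : Site d) (mountain ω (b, 0))).toNat : ℤ)
  else 0

open Classical in
/-- `F₋(b) = -1 - l_{(b,0)}^-(M_{(b,0)})` if the mountain is nonempty, `0` otherwise. -/
def Fminus {d : ℕ} (ω : Site d → Bool) (b : Fin d → ℤ) : ℤ :=
  if (mountain ω (b, 0)).Nonempty then
    -1 - ((depthMinus ((b, 0) : Site d) (mountain ω (b, 0))).toNat : ℤ)
  else 0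

/-- Shift of a configuration by a site `s`. -/
def shift {d : ℕ} (s : Site d) (ω : Site d → Bool) : Site d → Bool := fun v => ω (v + s)

/-- The origin of the zero-height hyperplane. -/
def origin (d : ℕ) : Site d := (0, 0)


section Aux
open Relation Function Finset

variable {d : ℕ}

lemma mem_signSet {x v : ℤ} :
    v ∈ signSet x ↔ (0 < x ∧ v = 1) ∨ (x < 0 ∧ v = -1) ∨ (x = 0 ∧ (v = -1 ∨ v = 1)) := by
  unfold signSet
  split_ifs with h1 h2 <;>
    simp only [Set.mem_singleton_iff, Set.mem_insert_iff] <;> omega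

lemma l1_nonneg (a b : Fin d → ℤ) : 0 ≤ l1 a b :=
  Finset.sum_nonneg fun _ _ => abs_nonneg _

lemma l1_symm (a b : Fin d → ℤ) : l1 a b = l1 b a :=
  Finset.sum_congr rfl fun j _ => abs_sub_comm _ _

lemma l1_eq_zero {a b : Fin d → ℤ} (h : l1 a b = 0) : a = b := by
  funext j
  have h2 := (Finset.sum_eq_zero_iff_of_nonneg (fun i _ => abs_nonneg (a i - b i))).1 h j
    (Finset.mem_univ j)
  have := abs_eq_zero.1 h2
  omega

lemma l1_triangle (a c b : Fin d → ℤ) : l1 a b ≤ l1 a c + l1 c b := by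
  unfold l1
  rw [← Finset.sum_add_distrib]
  exact Finset.sum_le_sum fun j _ => abs_sub_le _ _ _

lemma single_le_l1 {a b : Fin d → ℤ} (j : Fin d) : |a j - b j| ≤ l1 a b := by
  unfold l1
  exact Finset.single_le_sum (f := fun i => |a i - b i|) (fun i _ => abs_nonneg _) (Finset.mem_univ j)

lemma l1_add_right (a b s : Fin d → ℤ) : l1 (a + s) (b + s) = l1 a b :=
  Finset.sum_congr rfl fun j _ => by simp only [Pi.add_apply]; congr 1; ring

lemma l1_update (c b : Fin d → ℤ) (j : Fin d) (x : ℤ) :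
    l1 (Function.update c j x) b = l1 c b - |c j - b j| + |x - b j| := by
  unfold l1
  have h1 : (fun i => |Function.update c j x i - b i|)
      = Function.update (fun i => |c i - b i|) j (|x - b j|) := by
    funext i
    by_cases hi : i = j
    · subst hi; simp
    · simp [Function.update_of_ne hi]
  calc ∑ i, |Function.update c j x i - b i|
      = ∑ i, Function.update (fun i => |c i - b i|) j (|x - b j|) i := by rw [h1]
    _ = |x - b j| + ∑ i ∈ Finset.univ \ {j}, |c i - b i| := by
        rw [Finset.sum_update_of_mem (Finset.mem_univ j)]
    _ = (∑ i, |c i - b i|) - |c j - b j| + |x - b j| := by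
        rw [Finset.sum_eq_add_sum_sdiff_singleton_of_mem (Finset.mem_univ j) (fun i => |c i - b i|)]
        ring

lemma exists_step_toward {z1 b : Fin d → ℤ} (hne : z1 ≠ b) :
    ∃ q1 : Fin d → ℤ, l1 q1 z1 = 1 ∧ l1 q1 b = l1 z1 b - 1 := by
  have : ∃ j, z1 j ≠ b j := by
    by_contra h; push_neg at h; exact hne (funext h)
  obtain ⟨j, hj⟩ := this
  refine ⟨Function.update z1 j (z1 j + (if z1 j < b j then 1 else -1)), ?_, ?_⟩
  · rw [l1_update]
    have h0 : l1 z1 z1 = 0 := by unfold l1; simp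
    rw [h0]
    split_ifs <;> simp
  · rw [l1_update]
    split_ifs with h
    · rw [abs_of_nonpos (by omega), abs_of_nonpos (by omega)]; ring
    · have h' : b j < z1 j := by omega
      rw [abs_of_nonneg (by omega), abs_of_nonneg (by omega)]; ring
/-- The path component of `IsDPath`. -/
def Chain {d : ℕ} (ω : Site d → Bool) (u v : Site d) : Prop :=
  ∃ (k : ℕ) (p : Fin (k + 1) → Site d), Function.Injective p ∧
    p 0 = u ∧ p (Fin.last k) = v ∧
    ∀ i : Fin k, DStep ω (p i.castSucc) (p i.succ)

variable {d : ℕ}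

lemma chain_refl (ω : Site d → Bool) (u : Site d) : Chain ω u u :=
  ⟨0, fun _ => u, fun a b _ => Fin.ext (by omega), rfl, rfl, fun i => i.elim0⟩

lemma rtg_of_chain_aux (ω : Site d → Bool) :
    ∀ (k : ℕ) (p : Fin (k + 1) → Site d),
      (∀ i : Fin k, DStep ω (p i.castSucc) (p i.succ)) →
      Relation.ReflTransGen (DStep ω) (p 0) (p (Fin.last k)) := by
  intro k
  induction k with
  | zero =>
    intro p _
    have : Fin.last 0 = 0 := rfl
    rw [this]
  | succ k ih =>
    intro p hp
    have h1 := ih (p ∘ Fin.castSucc) (fun i => by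
      have h := hp i.castSucc
      rw [Fin.succ_castSucc] at h; exact h)
    have h2 : DStep ω (p (Fin.last k).castSucc) (p (Fin.last (k + 1))) := by
      have := hp (Fin.last k)
      rwa [Fin.succ_last] at this
    have e0 : (p ∘ Fin.castSucc) 0 = p 0 := by simp
    have el : (p ∘ Fin.castSucc) (Fin.last k) = p (Fin.last k).castSucc := rfl
    rw [e0, el] at h1
    exact h1.tail h2

lemma chain_snoc {ω : Site d → Bool} {u v v' : Site d}
    (h : Chain ω u v) (hs : DStep ω v v') : Chain ω u v' := by
  obtain ⟨k, p, hinj, h0, hl, hstep⟩ := h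
  by_cases hv : ∃ i, p i = v'
  · obtain ⟨i, hi⟩ := hv
    have hik : (i : ℕ) + 1 ≤ k + 1 := by omega
    refine ⟨i.val, fun j => p (Fin.castLE hik j), ?_, ?_, ?_, ?_⟩
    · intro a b hab
      exact Fin.castLE_injective hik (hinj hab)
    · show p (Fin.castLE hik 0) = u
      have : (Fin.castLE hik 0 : Fin (k + 1)) = 0 := Fin.ext rfl
      rw [this, h0]
    · show p (Fin.castLE hik (Fin.last i.val)) = v'
      have : (Fin.castLE hik (Fin.last i.val) : Fin (k + 1)) = i := Fin.ext rfl
      rw [this, hi]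
    · intro j
      have jk : (j : ℕ) < k := by have := j.isLt; have := i.isLt; omega
      show DStep ω (p (Fin.castLE hik j.castSucc)) (p (Fin.castLE hik j.succ))
      have e1 : (Fin.castLE hik j.castSucc : Fin (k + 1))
          = (⟨j.val, jk⟩ : Fin k).castSucc := Fin.ext rfl
      have e2 : (Fin.castLE hik j.succ : Fin (k + 1))
          = (⟨j.val, jk⟩ : Fin k).succ := Fin.ext rfl
      rw [e1, e2]
      exact hstep _
  · push_neg at hv
    refine ⟨k + 1, Fin.snoc p v', ?_, ?_, ?_, ?_⟩
    · intro a b hab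
      rcases Fin.eq_castSucc_or_eq_last a with ⟨a', rfl⟩ | rfl <;>
        rcases Fin.eq_castSucc_or_eq_last b with ⟨b', rfl⟩ | rfl
      · rw [Fin.snoc_castSucc, Fin.snoc_castSucc] at hab
        rw [hinj hab]
      · rw [Fin.snoc_castSucc, Fin.snoc_last] at hab
        exact absurd hab (hv a')
      · rw [Fin.snoc_castSucc, Fin.snoc_last] at hab
        exact absurd hab.symm (hv b')
      · rfl
    · have : (0 : Fin (k + 2)) = Fin.castSucc 0 := rfl
      rw [this, Fin.snoc_castSucc, h0]
    · rw [Fin.snoc_last]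
    · intro i
      rcases Fin.eq_castSucc_or_eq_last i with ⟨j, rfl⟩ | rfl
      · have e1 : (j.castSucc).succ = (j.succ).castSucc := Fin.succ_castSucc j
        rw [e1, Fin.snoc_castSucc, Fin.snoc_castSucc]
        exact hstep j
      · rw [Fin.succ_last, Fin.snoc_last, Fin.snoc_castSucc, hl]
        exact hs

lemma chain_iff_rtg {ω : Site d → Bool} {u v : Site d} :
    Chain ω u v ↔ Relation.ReflTransGen (DStep ω) u v := by
  constructor
  · rintro ⟨k, p, -, h0, hl, hs⟩
    have := rtg_of_chain_aux ω k p hs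
    rwa [h0, hl] at this
  · intro h
    induction h with
    | refl => exact chain_refl ω u
    | tail _ hstep ih => exact chain_snoc ih hstep

lemma isDPath_iff {ω : Site d → Bool} {u v : Site d} :
    IsDPath ω u v ↔ u.2 = 0 ∧ ω u = true ∧ Relation.ReflTransGen (DStep ω) u v :=
  and_congr_right fun _ => and_congr_right fun _ => chain_iff_rtg
section Claims
variable {d : ℕ}

lemma l1_self (b : Fin d → ℤ) : l1 b b = 0 := by unfold l1; simp

lemma exists_step_away {b : Fin d → ℤ} (hd : 1 ≤ d) :
    ∃ q1 : Fin d → ℤ, l1 q1 b = 1 := by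
  refine ⟨Function.update b ⟨0, hd⟩ (b ⟨0, hd⟩ + 1), ?_⟩
  rw [l1_update, l1_self]
  simp

lemma claimA_below (ω : Site d → Bool) (b : Fin d → ℤ) (hd : 1 ≤ d) :
    ∀ (n m : ℕ) (z : Site d), z.2 = -(n : ℤ) → (l1 z.1 b).toNat + 2 * m = n →
      Relation.ReflTransGen (DStep ω) z ((b, 0) : Site d) := by
  intro n
  induction n with
  | zero =>
    intro m z hz hl
    have hn := l1_nonneg z.1 b
    have h1 : l1 z.1 b = 0 := by omega
    have h2 : z = ((b, 0) : Site d) := Prod.ext (l1_eq_zero h1) (by omega)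
    rw [h2]
  | succ n ih =>
    intro m z hz hl
    have hneg : z.2 < 0 := by omega
    by_cases hb : z.1 = b
    · have hl0 : l1 z.1 b = 0 := by rw [hb, l1_self]
      obtain ⟨q1, hq1⟩ := exists_step_away (b := b) hd
      have hq1z : l1 q1 z.1 = 1 := by rw [hb]; exact hq1
      have hstep : DStep ω z (q1, z.2 + 1) :=
        Or.inr ⟨hq1z, by rw [mem_signSet]; right; left; exact ⟨hneg, by ring⟩, by omega⟩
      refine Relation.ReflTransGen.head hstep (ih (m - 1) (q1, z.2 + 1) (by push_cast; omega) ?_)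
      · show (l1 q1 b).toNat + 2 * (m - 1) = n
        have hq1n := l1_nonneg q1 b
        omega
    · obtain ⟨q1, hq1z, hq1b⟩ := exists_step_toward hb
      have hstep : DStep ω z (q1, z.2 + 1) :=
        Or.inr ⟨hq1z, by rw [mem_signSet]; right; left; exact ⟨hneg, by ring⟩, by omega⟩
      refine Relation.ReflTransGen.head hstep (ih m (q1, z.2 + 1) (by push_cast; omega) ?_)
      · show (l1 q1 b).toNat + 2 * m = n
        have hn1 := l1_nonneg z.1 b
        have hn2 : l1 z.1 b ≠ 0 := fun h => hb (l1_eq_zero h)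
        omega

lemma claimA_above (ω : Site d → Bool) (b : Fin d → ℤ) (hd : 1 ≤ d) :
    ∀ (n m : ℕ) (z : Site d), z.2 = (n : ℤ) → (l1 z.1 b).toNat + 2 * m = n →
      Relation.ReflTransGen (DStep ω) z ((b, 0) : Site d) := by
  intro n
  induction n with
  | zero =>
    intro m z hz hl
    have hn := l1_nonneg z.1 b
    have h1 : l1 z.1 b = 0 := by omega
    have h2 : z = ((b, 0) : Site d) := Prod.ext (l1_eq_zero h1) (by omega)
    rw [h2]
  | succ n ih =>
    intro m z hz hl
    have hpos : 0 < z.2 := by omega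
    by_cases hb : z.1 = b
    · have hl0 : l1 z.1 b = 0 := by rw [hb, l1_self]
      obtain ⟨q1, hq1⟩ := exists_step_away (b := b) hd
      have hq1z : l1 q1 z.1 = 1 := by rw [hb]; exact hq1
      have hstep : DStep ω z (q1, z.2 - 1) :=
        Or.inr ⟨hq1z, by rw [mem_signSet]; left; exact ⟨hpos, by ring⟩, by omega⟩
      refine Relation.ReflTransGen.head hstep (ih (m - 1) (q1, z.2 - 1) (by push_cast; omega) ?_)
      · show (l1 q1 b).toNat + 2 * (m - 1) = n
        have hq1n := l1_nonneg q1 b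
        omega
    · obtain ⟨q1, hq1z, hq1b⟩ := exists_step_toward hb
      have hstep : DStep ω z (q1, z.2 - 1) :=
        Or.inr ⟨hq1z, by rw [mem_signSet]; left; exact ⟨hpos, by ring⟩, by omega⟩
      refine Relation.ReflTransGen.head hstep (ih m (q1, z.2 - 1) (by push_cast; omega) ?_)
      · show (l1 q1 b).toNat + 2 * m = n
        have hn1 := l1_nonneg z.1 b
        have hn2 : l1 z.1 b ≠ 0 := fun h => hb (l1_eq_zero h)
        omega

lemma claimB_below {ω : Site d → Bool} {b : Fin d → ℤ} (hd : 1 ≤ d) {u z : Site d}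
    (hu : u.2 = 0) (h : Relation.ReflTransGen (DStep ω) u z) :
    z.2 ≤ 0 → l1 z.1 b ≤ -z.2 → Relation.ReflTransGen (DStep ω) u ((b, 0) : Site d) := by
  induction h with
  | refl =>
    intro h1 h2
    have hn := l1_nonneg u.1 b
    have h3 : u = ((b, 0) : Site d) := Prod.ext (l1_eq_zero (show l1 u.1 b = 0 by omega)) hu
    rw [← h3]
  | @tail y z hay hstep ih =>
    intro hz1 hz2
    have hn0 := l1_nonneg z.1 b
    by_cases hpar : ∃ m, (l1 z.1 b).toNat + 2 * m = (-z.2).toNat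
    · obtain ⟨m, hm⟩ := hpar
      exact (hay.tail hstep).trans (claimA_below ω b hd (-z.2).toNat m z (by omega) hm)
    · have hodd := fun m => (not_exists.mp hpar) m
      have hodd1 := hodd (((-z.2).toNat - (l1 z.1 b).toNat) / 2)
      rcases hstep with ⟨hq1, hsg, -⟩ | ⟨hq1, hsg, hne0⟩
      · rw [mem_signSet] at hsg
        rcases hsg with ⟨hy, he⟩ | ⟨hy, he⟩ | ⟨hy, he⟩
        · omega
        · refine ih ?_ ?_
          · omega
          · rw [← hq1]; omega
        · have hl0 : l1 z.1 b = 0 := by omega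
          have hy1 : y = ((b, 0) : Site d) :=
            Prod.ext (by rw [← hq1]; exact l1_eq_zero hl0) hy
          rw [← hy1]; exact hay
      · rw [mem_signSet] at hsg
        rcases hsg with ⟨hy, he⟩ | ⟨hy, he⟩ | ⟨hy, he⟩
        · omega
        · refine ih ?_ ?_
          · omega
          · have ht := l1_triangle y.1 z.1 b
            have hs := l1_symm y.1 z.1
            omega
        · exact absurd hy hne0

lemma claimB_above {ω : Site d → Bool} {b : Fin d → ℤ} (hd : 1 ≤ d) {u z : Site d}
    (hu : u.2 = 0) (h : Relation.ReflTransGen (DStep ω) u z) :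
    0 ≤ z.2 → l1 z.1 b ≤ z.2 → Relation.ReflTransGen (DStep ω) u ((b, 0) : Site d) := by
  induction h with
  | refl =>
    intro h1 h2
    have hn := l1_nonneg u.1 b
    have h3 : u = ((b, 0) : Site d) := Prod.ext (l1_eq_zero (show l1 u.1 b = 0 by omega)) hu
    rw [← h3]
  | @tail y z hay hstep ih =>
    intro hz1 hz2
    have hn0 := l1_nonneg z.1 b
    by_cases hpar : ∃ m, (l1 z.1 b).toNat + 2 * m = z.2.toNat
    · obtain ⟨m, hm⟩ := hpar
      exact (hay.tail hstep).trans (claimA_above ω b hd z.2.toNat m z (by omega) hm)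
    · have hodd1 := (not_exists.mp hpar) ((z.2.toNat - (l1 z.1 b).toNat) / 2)
      rcases hstep with ⟨hq1, hsg, -⟩ | ⟨hq1, hsg, hne0⟩
      · rw [mem_signSet] at hsg
        rcases hsg with ⟨hy, he⟩ | ⟨hy, he⟩ | ⟨hy, he⟩
        · refine ih ?_ ?_
          · omega
          · rw [← hq1]; omega
        · omega
        · have hl0 : l1 z.1 b = 0 := by omega
          have hy1 : y = ((b, 0) : Site d) :=
            Prod.ext (by rw [← hq1]; exact l1_eq_zero hl0) hy
          rw [← hy1]; exact hay
      · rw [mem_signSet] at hsg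
        rcases hsg with ⟨hy, he⟩ | ⟨hy, he⟩ | ⟨hy, he⟩
        · refine ih ?_ ?_
          · omega
          · have ht := l1_triangle y.1 z.1 b
            have hs := l1_symm y.1 z.1
            omega
        · omega
        · exact absurd hy hne0

end Claims
section Det
variable {d : ℕ} {ω : Site d → Bool}

lemma mem_hat_self (v : Site d) : v ∈ hatSet v := ⟨rfl, mul_self_nonneg v.2, le_refl _⟩

lemma dstep_vert {p : Site d} {h' : ℤ} (hsg : h' - p.2 ∈ signSet p.2)
    (hcl : ω (p.1, h') = true) : DStep ω p (p.1, h') := Or.inl ⟨rfl, hsg, hcl⟩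

lemma dstep_diag {p : Site d} {q1 : Fin d → ℤ} {h' : ℤ} (hl : l1 q1 p.1 = 1)
    (hsg : p.2 - h' ∈ signSet p.2) (h0 : p.2 ≠ 0) : DStep ω p ((q1, h') : Site d) :=
  Or.inr ⟨hl, hsg, h0⟩

lemma mem_hill_of_rtg {u w v : Site d} (hu : u.2 = 0) (hω : ω u = true)
    (h : Relation.ReflTransGen (DStep ω) u w) (hw : w ∈ hatSet v) : v ∈ hill ω u :=
  ⟨w, hw, isDPath_iff.2 ⟨hu, hω, h⟩⟩

lemma hill_elim {u v : Site d} (h : v ∈ hill ω u) :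
    ∃ w : Site d, w.1 = v.1 ∧ 0 ≤ v.2 * w.2 ∧ |v.2| ≤ |w.2| ∧ u.2 = 0 ∧ ω u = true ∧
      Relation.ReflTransGen (DStep ω) u w := by
  obtain ⟨w, hw, hp⟩ := h
  rw [isDPath_iff] at hp
  exact ⟨w, hw.1, hw.2.1, hw.2.2, hp.1, hp.2.1, hp.2.2⟩

lemma mem_mountain_zero {b : Fin d → ℤ} (hne : (mountain ω (b, 0)).Nonempty) :
    ((b, 0) : Site d) ∈ mountain ω (b, 0) := by
  obtain ⟨w, u, hu2, h0, hw⟩ := hne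
  exact ⟨u, hu2, h0, h0⟩

/-- The set of nonnegative depths of the mountain at `b`. -/
def Kplus (ω : Site d → Bool) (b : Fin d → ℤ) : Set ℕ :=
  {k : ℕ | ((b, (k : ℤ)) : Site d) ∈ mountain ω (b, 0)}

def Kminus (ω : Site d → Bool) (b : Fin d → ℤ) : Set ℕ :=
  {k : ℕ | ((b, -(k : ℤ)) : Site d) ∈ mountain ω (b, 0)}

lemma depthPlus_eq (b : Fin d → ℤ) :
    depthPlus ((b, 0) : Site d) (mountain ω (b, 0)) = ⨆ k ∈ Kplus ω b, (k : ℕ∞) := by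
  unfold depthPlus Kplus
  simp only [zero_add]

lemma depthMinus_eq (b : Fin d → ℤ) :
    depthMinus ((b, 0) : Site d) (mountain ω (b, 0)) = ⨆ k ∈ Kminus ω b, (k : ℕ∞) := by
  unfold depthMinus Kminus
  simp only [zero_sub]

lemma enat_biSup_mem {K : Set ℕ} (h0 : K.Nonempty) (hfin : (⨆ k ∈ K, (k : ℕ∞)) ≠ ⊤) :
    (⨆ k ∈ K, (k : ℕ∞)).toNat ∈ K ∧ ∀ k ∈ K, k ≤ (⨆ k ∈ K, (k : ℕ∞)).toNat := by
  set s := ⨆ k ∈ K, (k : ℕ∞) with hs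
  have hcoe : ((s.toNat : ℕ) : ℕ∞) = s := ENat.coe_toNat hfin
  have hb' : ∀ k ∈ K, k ≤ s.toNat := by
    intro k hk
    have h1 : (k : ℕ∞) ≤ s := le_biSup _ hk
    rw [← hcoe] at h1
    exact_mod_cast h1
  refine ⟨?_, hb'⟩
  by_contra hmem
  rcases Nat.eq_zero_or_pos s.toNat with h | h
  · obtain ⟨k0, hk0⟩ := h0
    have := hb' k0 hk0
    have : k0 = s.toNat := by omega
    exact hmem (this ▸ hk0)
  · have hle : s ≤ ((s.toNat - 1 : ℕ) : ℕ∞) := by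
      apply iSup₂_le
      intro k hk
      have h1 := hb' k hk
      have h2 : k ≠ s.toNat := fun e => hmem (e ▸ hk)
      exact_mod_cast Nat.cast_le.2 (show k ≤ s.toNat - 1 by omega)
    have h3 := le_trans hcoe.le hle
    have h4 := Nat.cast_le.1 h3
    omega

lemma Fplus_open (hd : 1 ≤ d) {b : Fin d → ℤ}
    (hfin : depthPlus ((b, 0) : Site d) (mountain ω (b, 0)) ≠ ⊤) :
    ω (b, Fplus ω b) = false := by
  by_contra hcl
  rw [Bool.not_eq_false] at hcl
  by_cases hne : (mountain ω (b, 0)).Nonempty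
  · rw [Fplus, if_pos hne] at hcl
    set L := (depthPlus ((b, 0) : Site d) (mountain ω (b, 0))).toNat with hLdef
    have hK0 : (0 : ℕ) ∈ Kplus ω b := by
      have := mem_mountain_zero hne
      simpa [Kplus] using this
    rw [depthPlus_eq] at hfin
    obtain ⟨hLmem, hLmax⟩ := enat_biSup_mem ⟨0, hK0⟩ hfin
    rw [← depthPlus_eq b] at hLmem hLmax
    -- hLmem : L ∈ Kplus ω b
    have hcl' : ω (b, (L : ℤ) + 1) = true := by
      rw [show ((L : ℤ) + 1) = 1 + (L : ℤ) by ring]; exact hcl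
    obtain ⟨u, hu2, hu0, huL⟩ := hLmem
    obtain ⟨w, hw1, hw2, hw3, -, hωu, hrtg⟩ := hill_elim huL
    dsimp only at hw2 hw3
    rw [← hLdef] at hw2 hw3
    have habsL : |((L : ℤ))| = (L : ℤ) := abs_of_nonneg (by positivity)
    have hup : ((b, (L : ℤ) + 1) : Site d) ∈ hill ω u := by
      rcases le_or_gt ((L : ℤ) + 1) w.2 with hwge | hwlt
      · refine mem_hill_of_rtg hu2 hωu hrtg ⟨hw1, ?_, ?_⟩
        · exact mul_nonneg (by positivity) (by omega)
        · rw [abs_of_nonneg (by positivity), abs_of_nonneg (by omega)]; omega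
      · rcases le_or_gt 0 w.2 with hw0 | hwneg
        · have hwL : w.2 = (L : ℤ) := by rw [abs_of_nonneg hw0] at hw3; omega
          have hstep : DStep ω w (w.1, (L : ℤ) + 1) :=
            dstep_vert (by rw [mem_signSet]; omega) (by rw [hw1]; exact hcl')
          rw [hw1] at hstep
          exact mem_hill_of_rtg hu2 hωu (hrtg.tail hstep) (mem_hat_self _)
        · have hL0 : (L : ℤ) = 0 := by
            have h1 : (L : ℤ) * w.2 ≤ (L : ℤ) * (-1) :=
              mul_le_mul_of_nonneg_left (by omega) (by positivity)
            have h2 : (L : ℤ) * (-1) = -(L : ℤ) := by ring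
            omega
          have hrtg2 := claimB_below (b := b) hd hu2 hrtg (by omega)
            (by rw [hw1, l1_self]; omega)
          have hstep : DStep ω ((b, 0) : Site d) (b, (L : ℤ) + 1) := by
            have h := dstep_vert (ω := ω) (p := ((b, 0) : Site d)) (h' := (L : ℤ) + 1)
              (by rw [mem_signSet]; omega) (by exact hcl')
            exact h
          exact mem_hill_of_rtg hu2 hωu (hrtg2.tail hstep) (mem_hat_self _)
    have hK1 : (L + 1 : ℕ) ∈ Kplus ω b := by
      show ((b, ((L + 1 : ℕ) : ℤ)) : Site d) ∈ mountain ω (b, 0)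
      have : ((L + 1 : ℕ) : ℤ) = (L : ℤ) + 1 := by push_cast; ring
      rw [this]
      exact ⟨u, hu2, hu0, hup⟩
    have := hLmax (L + 1) hK1
    omega
  · rw [Fplus, if_neg hne] at hcl
    have hmem : ((b, 0) : Site d) ∈ hill ω (b, 0) :=
      mem_hill_of_rtg rfl (by exact_mod_cast hcl) Relation.ReflTransGen.refl (mem_hat_self _)
    exact hne ⟨(b, 0), (b, 0), rfl, hmem, hmem⟩

lemma Fminus_open (hd : 1 ≤ d) {b : Fin d → ℤ}
    (hfin : depthMinus ((b, 0) : Site d) (mountain ω (b, 0)) ≠ ⊤) :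
    ω (b, Fminus ω b) = false := by
  by_contra hcl
  rw [Bool.not_eq_false] at hcl
  by_cases hne : (mountain ω (b, 0)).Nonempty
  · rw [Fminus, if_pos hne] at hcl
    set L := (depthMinus ((b, 0) : Site d) (mountain ω (b, 0))).toNat with hLdef
    have hK0 : (0 : ℕ) ∈ Kminus ω b := by
      have := mem_mountain_zero hne
      simpa [Kminus] using this
    rw [depthMinus_eq] at hfin
    obtain ⟨hLmem, hLmax⟩ := enat_biSup_mem ⟨0, hK0⟩ hfin
    rw [← depthMinus_eq b] at hLmem hLmax
    have hcl' : ω (b, -(L : ℤ) - 1) = true := by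
      rw [show (-(L : ℤ) - 1) = -1 - (L : ℤ) by ring]; exact hcl
    obtain ⟨u, hu2, hu0, huL⟩ := hLmem
    obtain ⟨w, hw1, hw2, hw3, -, hωu, hrtg⟩ := hill_elim huL
    dsimp only at hw2 hw3
    rw [← hLdef] at hw2 hw3
    -- here hw2 : 0 ≤ (-(L:ℤ)) * w.2, hw3 : |(-(L:ℤ))| ≤ |w.2|
    have hup : ((b, -(L : ℤ) - 1) : Site d) ∈ hill ω u := by
      rcases le_or_gt w.2 (-(L : ℤ) - 1) with hwge | hwlt
      · refine mem_hill_of_rtg hu2 hωu hrtg ⟨hw1, ?_, ?_⟩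
        · show 0 ≤ (-(L : ℤ) - 1) * w.2
          have h := mul_nonneg (show (0:ℤ) ≤ (L : ℤ) + 1 by positivity)
            (show (0:ℤ) ≤ -w.2 by omega)
          have he : ((L : ℤ) + 1) * (-w.2) = (-(L : ℤ) - 1) * w.2 := by ring
          rw [he] at h
          exact h
        · rw [abs_of_nonpos (by omega), abs_of_nonpos (by omega)]; omega
      · rcases le_or_gt w.2 0 with hw0 | hwpos
        · have hwL : w.2 = -(L : ℤ) := by
            rw [abs_of_nonpos hw0, abs_neg, abs_of_nonneg (by positivity)] at hw3; omega
          have hstep : DStep ω w (w.1, -(L : ℤ) - 1) :=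
            dstep_vert (by rw [mem_signSet]; omega) (by rw [hw1]; exact hcl')
          rw [hw1] at hstep
          exact mem_hill_of_rtg hu2 hωu (hrtg.tail hstep) (mem_hat_self _)
        · have hL0 : (L : ℤ) = 0 := by
            have h1 : (-(L : ℤ)) * w.2 ≤ (-(L : ℤ)) * 1 :=
              mul_le_mul_of_nonpos_left (by omega) (by omega)
            have h2 : (-(L : ℤ)) * 1 = -(L : ℤ) := by ring
            omega
          have hrtg2 := claimB_above (b := b) hd hu2 hrtg (by omega)
            (by rw [hw1, l1_self]; omega)
          have hstep : DStep ω ((b, 0) : Site d) (b, -(L : ℤ) - 1) := by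
            have h := dstep_vert (ω := ω) (p := ((b, 0) : Site d)) (h' := -(L : ℤ) - 1)
              (by rw [mem_signSet]; omega) (by exact hcl')
            exact h
          exact mem_hill_of_rtg hu2 hωu (hrtg2.tail hstep) (mem_hat_self _)
    have hK1 : (L + 1 : ℕ) ∈ Kminus ω b := by
      show ((b, -((L + 1 : ℕ) : ℤ)) : Site d) ∈ mountain ω (b, 0)
      have : -((L + 1 : ℕ) : ℤ) = -(L : ℤ) - 1 := by push_cast; ring
      rw [this]
      exact ⟨u, hu2, hu0, hup⟩
    have := hLmax (L + 1) hK1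
    omega
  · rw [Fminus, if_neg hne] at hcl
    have hmem : ((b, 0) : Site d) ∈ hill ω (b, 0) :=
      mem_hill_of_rtg rfl (by exact_mod_cast hcl) Relation.ReflTransGen.refl (mem_hat_self _)
    exact hne ⟨(b, 0), (b, 0), rfl, hmem, hmem⟩

end Det
section Lip
variable {d : ℕ} {ω : Site d → Bool}

lemma Fplus_nonneg (b : Fin d → ℤ) : 0 ≤ Fplus ω b := by
  unfold Fplus
  split_ifs
  · positivity
  · exact le_refl 0

lemma Fminus_nonpos (b : Fin d → ℤ) : Fminus ω b ≤ 0 := by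
  unfold Fminus
  split_ifs
  · have : (0:ℤ) ≤ ((depthMinus ((b, 0) : Site d) (mountain ω (b, 0))).toNat : ℤ) := by
      positivity
    omega
  · exact le_refl 0

lemma mountain_neighbor_plus {b b' : Fin d → ℤ} (hbb : l1 b b' = 1) {L : ℕ} (hL : 1 ≤ L)
    (hmem : ((b, (L : ℤ)) : Site d) ∈ mountain ω (b, 0)) :
    ((b', ((L - 1 : ℕ) : ℤ)) : Site d) ∈ mountain ω (b', 0) := by
  obtain ⟨u, hu2, hu0, huL⟩ := hmem
  obtain ⟨w, hw1, hw2, hw3, -, hωu, hrtg⟩ := hill_elim huL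
  dsimp only at hw2 hw3
  have hLpos : (0:ℤ) ≤ (L : ℤ) := by positivity
  have hw0 : 0 ≤ w.2 := by
    by_contra hc
    push_neg at hc
    have h1 : (L : ℤ) * w.2 ≤ (L : ℤ) * (-1) :=
      mul_le_mul_of_nonneg_left (by omega) hLpos
    have h2 : (L : ℤ) * (-1) = -(L : ℤ) := by ring
    omega
  have hwge : (L : ℤ) ≤ w.2 := by
    rw [abs_of_nonneg hLpos, abs_of_nonneg hw0] at hw3; exact hw3
  have hstep : DStep ω w ((b', w.2 - 1) : Site d) :=
    dstep_diag (by rw [hw1]; exact (l1_symm b' b).trans hbb)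
      (by rw [mem_signSet]; omega) (by omega)
  have hrtg2 := hrtg.tail hstep
  have hcast : ((L - 1 : ℕ) : ℤ) = (L : ℤ) - 1 := by
    rw [Nat.cast_sub hL]; norm_num
  refine ⟨u, hu2, ?_, ?_⟩
  · refine mem_hill_of_rtg hu2 hωu hrtg2 ⟨rfl, ?_, ?_⟩
    · show (0:ℤ) ≤ 0 * (w.2 - 1); simp
    · show |(0:ℤ)| ≤ |w.2 - 1|; simp
  · refine mem_hill_of_rtg hu2 hωu hrtg2 ⟨rfl, ?_, ?_⟩
    · show (0:ℤ) ≤ ((L - 1 : ℕ) : ℤ) * (w.2 - 1)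
      exact mul_nonneg (by positivity) (by omega)
    · show |((L - 1 : ℕ) : ℤ)| ≤ |w.2 - 1|
      rw [abs_of_nonneg (by positivity), abs_of_nonneg (by omega), hcast]
      omega

lemma mountain_neighbor_minus {b b' : Fin d → ℤ} (hbb : l1 b b' = 1) {L : ℕ} (hL : 1 ≤ L)
    (hmem : ((b, -(L : ℤ)) : Site d) ∈ mountain ω (b, 0)) :
    ((b', -((L - 1 : ℕ) : ℤ)) : Site d) ∈ mountain ω (b', 0) := by
  obtain ⟨u, hu2, hu0, huL⟩ := hmem
  obtain ⟨w, hw1, hw2, hw3, -, hωu, hrtg⟩ := hill_elim huL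
  dsimp only at hw2 hw3
  have hLpos : (0:ℤ) ≤ (L : ℤ) := by positivity
  have hw0 : w.2 ≤ 0 := by
    by_contra hc
    push_neg at hc
    have h1 : (-(L : ℤ)) * w.2 ≤ (-(L : ℤ)) * 1 :=
      mul_le_mul_of_nonpos_left (by omega) (by omega)
    have h2 : (-(L : ℤ)) * 1 = -(L : ℤ) := by ring
    omega
  have hwge : w.2 ≤ -(L : ℤ) := by
    rw [abs_neg, abs_of_nonneg hLpos, abs_of_nonpos hw0] at hw3; omega
  have hstep : DStep ω w ((b', w.2 + 1) : Site d) :=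
    dstep_diag (by rw [hw1]; exact (l1_symm b' b).trans hbb)
      (by rw [mem_signSet]; omega) (by omega)
  have hrtg2 := hrtg.tail hstep
  have hcast : ((L - 1 : ℕ) : ℤ) = (L : ℤ) - 1 := by
    rw [Nat.cast_sub hL]; norm_num
  refine ⟨u, hu2, ?_, ?_⟩
  · refine mem_hill_of_rtg hu2 hωu hrtg2 ⟨rfl, ?_, ?_⟩
    · show (0:ℤ) ≤ 0 * (w.2 + 1); simp
    · show |(0:ℤ)| ≤ |w.2 + 1|; simp
  · refine mem_hill_of_rtg hu2 hωu hrtg2 ⟨rfl, ?_, ?_⟩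
    · show (0:ℤ) ≤ (-((L - 1 : ℕ) : ℤ)) * (w.2 + 1)
      have h := mul_nonneg (show (0:ℤ) ≤ ((L - 1 : ℕ) : ℤ) by positivity)
        (show (0:ℤ) ≤ -(w.2 + 1) by omega)
      have he : ((L - 1 : ℕ) : ℤ) * (-(w.2 + 1)) = (-((L - 1 : ℕ) : ℤ)) * (w.2 + 1) := by ring
      rw [he] at h
      exact h
    · show |(-((L - 1 : ℕ) : ℤ))| ≤ |w.2 + 1|
      rw [abs_neg, abs_of_nonneg (by positivity), abs_of_nonpos (by omega), hcast]
      omega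

lemma Fplus_lip_one {b b' : Fin d → ℤ}
    (hfb : depthPlus ((b, 0) : Site d) (mountain ω (b, 0)) ≠ ⊤)
    (hfb' : depthPlus ((b', 0) : Site d) (mountain ω (b', 0)) ≠ ⊤)
    (hbb : l1 b b' = 1) : Fplus ω b ≤ Fplus ω b' + 1 := by
  by_cases hne : (mountain ω (b, 0)).Nonempty
  · rw [Fplus, if_pos hne]
    set L := (depthPlus ((b, 0) : Site d) (mountain ω (b, 0))).toNat with hLdef
    rcases Nat.eq_zero_or_pos L with h0 | hpos
    · rw [h0]
      have := Fplus_nonneg (ω := ω) b'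
      omega
    · have hK0 : (0 : ℕ) ∈ Kplus ω b := by
        simpa [Kplus] using mem_mountain_zero hne
      rw [depthPlus_eq] at hfb
      obtain ⟨hLmem, -⟩ := enat_biSup_mem ⟨0, hK0⟩ hfb
      rw [← depthPlus_eq b] at hLmem
      have htrans := mountain_neighbor_plus hbb hpos hLmem
      have hne' : (mountain ω (b', 0)).Nonempty := ⟨_, htrans⟩
      have hK' : (L - 1 : ℕ) ∈ Kplus ω b' := htrans
      rw [depthPlus_eq] at hfb'
      obtain ⟨-, hmax'⟩ := enat_biSup_mem ⟨_, hK'⟩ hfb'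
      have hle := hmax' _ hK'
      rw [Fplus, if_pos hne']
      rw [← depthPlus_eq b'] at hle
      omega
  · rw [Fplus, if_neg hne]
    have := Fplus_nonneg (ω := ω) b'
    omega

lemma Fminus_eq_of {b : Fin d → ℤ} (hne : (mountain ω (b, 0)).Nonempty) :
    Fminus ω b = -1 - ((depthMinus ((b, 0) : Site d) (mountain ω (b, 0))).toNat : ℤ) := by
  rw [Fminus, if_pos hne]

lemma Fminus_eq_empty {b : Fin d → ℤ} (hne : ¬(mountain ω (b, 0)).Nonempty) :
    Fminus ω b = 0 := by
  rw [Fminus, if_neg hne]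

lemma Fminus_lip_one {b b' : Fin d → ℤ}
    (hfb : depthMinus ((b, 0) : Site d) (mountain ω (b, 0)) ≠ ⊤)
    (hfb' : depthMinus ((b', 0) : Site d) (mountain ω (b', 0)) ≠ ⊤)
    (hbb : l1 b b' = 1) : Fminus ω b' ≤ Fminus ω b + 1 := by
  by_cases hne : (mountain ω (b, 0)).Nonempty
  · rw [Fminus_eq_of hne]
    set L := (depthMinus ((b, 0) : Site d) (mountain ω (b, 0))).toNat with hLdef
    rcases Nat.eq_zero_or_pos L with h0 | hpos
    · rw [h0]
      have := Fminus_nonpos (ω := ω) b'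
      omega
    · have hK0 : (0 : ℕ) ∈ Kminus ω b := by
        simpa [Kminus] using mem_mountain_zero hne
      rw [depthMinus_eq] at hfb
      obtain ⟨hLmem, -⟩ := enat_biSup_mem ⟨0, hK0⟩ hfb
      rw [← depthMinus_eq b] at hLmem
      have htrans := mountain_neighbor_minus hbb hpos hLmem
      have hne2 : (mountain ω (b', 0)).Nonempty := ⟨_, htrans⟩
      have hK' : (L - 1 : ℕ) ∈ Kminus ω b' := htrans
      rw [depthMinus_eq] at hfb'
      obtain ⟨-, hmax'⟩ := enat_biSup_mem ⟨_, hK'⟩ hfb'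
      have hle := hmax' _ hK'
      rw [Fminus_eq_of hne2]
      rw [← depthMinus_eq b'] at hle
      omega
  · rw [Fminus_eq_empty hne]
    have := Fminus_nonpos (ω := ω) b'
    omega

end Lip
section Meas
variable {d : ℕ}

lemma measurable_shift (s : Site d) : Measurable (shift (d := d) s) :=
  measurable_pi_lambda _ fun v => measurable_pi_apply (v + s)

lemma measurableSet_eval (q : Site d) : MeasurableSet {ω : Site d → Bool | ω q = true} := by
  have h : {ω : Site d → Bool | ω q = true} = (fun ω : Site d → Bool => ω q) ⁻¹' {true} := rfl
  rw [h]
  exact measurable_pi_apply q (measurableSet_singleton true)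

lemma measurableSet_dstep (p q : Site d) :
    MeasurableSet {ω : Site d → Bool | DStep ω p q} := by
  have h : {ω : Site d → Bool | DStep ω p q}
      = ({ω : Site d → Bool | q.1 = p.1 ∧ (q.2 - p.2) ∈ signSet p.2} ∩
          {ω : Site d → Bool | ω q = true})
        ∪ {ω : Site d → Bool | l1 q.1 p.1 = 1 ∧ (p.2 - q.2) ∈ signSet p.2 ∧ p.2 ≠ 0} := by
    ext ω
    simp only [DStep, Set.mem_setOf_eq, Set.mem_union, Set.mem_inter_iff]
    tauto
  rw [h]
  exact ((MeasurableSet.const _).inter (measurableSet_eval q)).union (MeasurableSet.const _)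

lemma measurableSet_isDPath (u v : Site d) :
    MeasurableSet {ω : Site d → Bool | IsDPath ω u v} := by
  have h : {ω : Site d → Bool | IsDPath ω u v} =
      {ω : Site d → Bool | u.2 = 0} ∩ ({ω : Site d → Bool | ω u = true} ∩
        ⋃ (k : ℕ) (p : Fin (k + 1) → Site d),
          ({ω : Site d → Bool |
              Function.Injective p ∧ p 0 = u ∧ p (Fin.last k) = v} ∩
            ⋂ i : Fin k, {ω : Site d → Bool | DStep ω (p i.castSucc) (p i.succ)})) := by
    ext ω
    simp only [IsDPath, Set.mem_setOf_eq, Set.mem_inter_iff, Set.mem_iUnion, Set.mem_iInter]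
    tauto
  rw [h]
  refine (MeasurableSet.const _).inter ((measurableSet_eval u).inter ?_)
  refine MeasurableSet.iUnion fun k => MeasurableSet.iUnion fun p => ?_
  exact (MeasurableSet.const _).inter
    (MeasurableSet.iInter fun i => measurableSet_dstep _ _)

lemma measurableSet_reaches (u v : Site d) :
    MeasurableSet {ω : Site d → Bool | reaches ω u v} := by
  have h : {ω : Site d → Bool | reaches ω u v}
      = ⋃ w : Site d, ({ω : Site d → Bool | w ∈ hatSet v} ∩
          {ω : Site d → Bool | IsDPath ω u w}) := by
    ext ω
    simp only [reaches, Set.mem_setOf_eq, Set.mem_iUnion, Set.mem_inter_iff]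
  rw [h]
  exact MeasurableSet.iUnion fun w =>
    (MeasurableSet.const _).inter (measurableSet_isDPath u w)

lemma measurableSet_radius_gt (u : Site d) (x : ℝ≥0∞) :
    MeasurableSet {ω : Site d → Bool | x < radius u (hill ω u)} := by
  have h : {ω : Site d → Bool | x < radius u (hill ω u)}
      = ⋃ v : Site d, ({ω : Site d → Bool | reaches ω u v} ∩
          {ω : Site d → Bool | x < ((dist1 u v).toNat : ℝ≥0∞)}) := by
    ext ω
    simp only [radius, hill, lt_iSup_iff, Set.mem_setOf_eq, Set.mem_iUnion,
      Set.mem_inter_iff, exists_prop]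
  rw [h]
  exact MeasurableSet.iUnion fun v =>
    (measurableSet_reaches u v).inter (MeasurableSet.const _)

lemma dist1_shift (u v s : Site d) : dist1 (u + s) (v + s) = dist1 u v := by
  unfold dist1
  rw [Prod.fst_add, Prod.fst_add, Prod.snd_add, Prod.snd_add, l1_add_right]
  congr 1
  congr 1
  ring

lemma dstep_shift {s : Site d} (hs : s.2 = 0) (ω : Site d → Bool) (p q : Site d) :
    DStep (shift s ω) p q ↔ DStep ω (p + s) (q + s) := by
  unfold DStep shift
  simp only [Prod.fst_add, Prod.snd_add, hs, add_zero, add_left_inj, l1_add_right]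

lemma rtg_shift {s : Site d} (hs : s.2 = 0) (ω : Site d → Bool) (u v : Site d) :
    Relation.ReflTransGen (DStep (shift s ω)) u v ↔
      Relation.ReflTransGen (DStep ω) (u + s) (v + s) := by
  constructor
  · intro h
    exact Relation.ReflTransGen.lift (· + s)
      (fun a b hab => (dstep_shift hs ω a b).1 hab) _ _ h
  · intro h
    have h2 := Relation.ReflTransGen.lift (· - s)
      (fun a b hab => by
        have : DStep (shift s ω) (a - s) (b - s) := by
          rw [dstep_shift hs ω]
          simpa using hab
        exact this) _ _ h
    simpa [Function.onFun] using h2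

lemma hat_shift {s : Site d} (hs : s.2 = 0) (w v : Site d) :
    w + s ∈ hatSet (v + s) ↔ w ∈ hatSet v := by
  unfold hatSet
  simp only [Set.mem_setOf_eq, Prod.fst_add, Prod.snd_add, hs, add_zero, add_left_inj]

lemma isDPath_shift {s : Site d} (hs : s.2 = 0) (ω : Site d → Bool) (u w : Site d) :
    IsDPath (shift s ω) u w ↔ IsDPath ω (u + s) (w + s) := by
  rw [isDPath_iff, isDPath_iff, rtg_shift hs]
  have h1 : (u + s).2 = u.2 := by rw [Prod.snd_add, hs, add_zero]
  rw [h1]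
  rfl

lemma reaches_shift {s : Site d} (hs : s.2 = 0) (ω : Site d → Bool) (u v : Site d) :
    reaches (shift s ω) u v ↔ reaches ω (u + s) (v + s) := by
  constructor
  · rintro ⟨w, hw, hp⟩
    exact ⟨w + s, (hat_shift hs w v).2 hw, (isDPath_shift hs ω u w).1 hp⟩
  · rintro ⟨w, hw, hp⟩
    refine ⟨w - s, ?_, ?_⟩
    · have : (w - s) + s = w := by abel
      rw [← hat_shift hs (w - s) v, this]
      exact hw
    · rw [isDPath_shift hs ω]
      have : (w - s) + s = w := by abel
      rw [this]
      exact hp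

lemma radius_shift {s : Site d} (hs : s.2 = 0) (ω : Site d → Bool) (u : Site d) :
    radius u (hill (shift s ω) u) = radius (u + s) (hill ω (u + s)) := by
  unfold radius
  apply le_antisymm
  · refine iSup₂_le fun v hv => ?_
    have hv' : v + s ∈ hill ω (u + s) := (reaches_shift hs ω u v).1 hv
    have he : dist1 u v = dist1 (u + s) (v + s) := (dist1_shift u v s).symm
    exact le_trans (le_of_eq (by rw [he])) (le_iSup₂ (v + s) hv')
  · refine iSup₂_le fun v hv => ?_
    have hv' : v - s ∈ hill (shift s ω) u := by
      rw [hill, Set.mem_setOf_eq, reaches_shift hs ω u (v - s)]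
      have : (v - s) + s = v := by abel
      rw [this]
      exact hv
    have he : dist1 (u + s) v = dist1 u (v - s) := by
      have h2 : (v - s) + s = v := by abel
      rw [← h2, dist1_shift]
      rw [h2]
    exact le_trans (le_of_eq (by rw [he])) (le_iSup₂ (v - s) hv')

end Meas
section Prob
open Filter Topology
variable {d : ℕ}

lemma measure_radius_eq (μ : Measure (Site d → Bool))
    (hinv : ∀ s : Site d, μ.map (shift s) = μ) (c : Fin d → ℤ) (x : ℝ≥0∞) :
    μ {ω : Site d → Bool | x < radius ((c, 0) : Site d) (hill ω ((c, 0) : Site d))}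
      = μ {ω : Site d → Bool | x < radius (origin d) (hill ω (origin d))} := by
  have horig : origin d + ((c, 0) : Site d) = ((c, 0) : Site d) := by
    simp [origin, Prod.ext_iff]
  have hpre : {ω : Site d → Bool | x < radius ((c, 0) : Site d) (hill ω ((c, 0) : Site d))}
      = shift ((c, 0) : Site d) ⁻¹'
          {ω : Site d → Bool | x < radius (origin d) (hill ω (origin d))} := by
    ext ω
    simp only [Set.mem_preimage, Set.mem_setOf_eq]
    rw [radius_shift (hs := rfl), horig]
  rw [hpre, ← Measure.map_apply (measurable_shift _) (measurableSet_radius_gt _ x),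
    hinv]

lemma bad_incl (ω : Site d → Bool) (b : Fin d → ℤ) (m : ℕ)
    (h : depthPlus ((b, 0) : Site d) (mountain ω (b, 0)) = ⊤ ∨
         depthMinus ((b, 0) : Site d) (mountain ω (b, 0)) = ⊤) :
    ∃ c : Fin d → ℤ,
      ((((l1 c b).toNat + m + 1 : ℕ)) : ℝ≥0∞)
        < radius ((c, 0) : Site d) (hill ω ((c, 0) : Site d)) := by
  rcases h with h | h
  · have hsup : (⨆ k ∈ Kplus ω b, (k : ℕ∞)) = ⊤ := by rw [← depthPlus_eq]; exact h
    have hex : ∃ k' ∈ Kplus ω b, m + 2 ≤ k' := by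
      by_contra hc
      push_neg at hc
      have hle : (⨆ k ∈ Kplus ω b, (k : ℕ∞)) ≤ ((m + 1 : ℕ) : ℕ∞) :=
        iSup₂_le fun k hk => Nat.cast_le.2 (by have := hc k hk; omega)
      rw [hsup, top_le_iff] at hle
      exact ENat.coe_ne_top (m + 1) hle
    obtain ⟨k', hk', hk2⟩ := hex
    obtain ⟨u, hu2, hu0, hk⟩ := hk'
    refine ⟨u.1, ?_⟩
    have huu : ((u.1, (0 : ℤ)) : Site d) = u := Prod.ext rfl hu2.symm
    rw [huu]
    have hrad : ((dist1 u ((b, (k' : ℤ)) : Site d)).toNat : ℝ≥0∞) ≤ radius u (hill ω u) :=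
      le_iSup₂ (f := fun v (_ : v ∈ hill ω u) => ((dist1 u v).toNat : ℝ≥0∞)) _ hk
    have hd1 : dist1 u ((b, (k' : ℤ)) : Site d) = l1 u.1 b + k' := by
      unfold dist1
      dsimp only
      rw [hu2]
      have he : (0 : ℤ) - (k' : ℤ) = -(k' : ℤ) := by ring
      rw [he, abs_neg, abs_of_nonneg (by positivity)]
    refine lt_of_lt_of_le ?_ hrad
    have hnn := l1_nonneg u.1 b
    exact_mod_cast Nat.cast_lt.2
      (show (l1 u.1 b).toNat + m + 1 < (dist1 u ((b, (k' : ℤ)) : Site d)).toNat by omega)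
  · have hsup : (⨆ k ∈ Kminus ω b, (k : ℕ∞)) = ⊤ := by rw [← depthMinus_eq]; exact h
    have hex : ∃ k' ∈ Kminus ω b, m + 2 ≤ k' := by
      by_contra hc
      push_neg at hc
      have hle : (⨆ k ∈ Kminus ω b, (k : ℕ∞)) ≤ ((m + 1 : ℕ) : ℕ∞) :=
        iSup₂_le fun k hk => Nat.cast_le.2 (by have := hc k hk; omega)
      rw [hsup, top_le_iff] at hle
      exact ENat.coe_ne_top (m + 1) hle
    obtain ⟨k', hk', hk2⟩ := hex
    obtain ⟨u, hu2, hu0, hk⟩ := hk'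
    refine ⟨u.1, ?_⟩
    have huu : ((u.1, (0 : ℤ)) : Site d) = u := Prod.ext rfl hu2.symm
    rw [huu]
    have hrad : ((dist1 u ((b, -(k' : ℤ)) : Site d)).toNat : ℝ≥0∞) ≤ radius u (hill ω u) :=
      le_iSup₂ (f := fun v (_ : v ∈ hill ω u) => ((dist1 u v).toNat : ℝ≥0∞)) _ hk
    have hd1 : dist1 u ((b, -(k' : ℤ)) : Site d) = l1 u.1 b + k' := by
      unfold dist1
      dsimp only
      rw [hu2]
      have he : (0 : ℤ) - (-(k' : ℤ)) = (k' : ℤ) := by ring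
      rw [he, abs_of_nonneg (by positivity)]
    refine lt_of_lt_of_le ?_ hrad
    have hnn := l1_nonneg u.1 b
    exact_mod_cast Nat.cast_lt.2
      (show (l1 u.1 b).toNat + m + 1 < (dist1 u ((b, -(k' : ℤ)) : Site d)).toNat by omega)

lemma counting (q : ℕ → ℝ≥0∞) (b : Fin d → ℤ) (m : ℕ) :
    ∑' c : Fin d → ℤ, q ((l1 c b).toNat + m)
      ≤ 3 ^ d * ∑' j : ℕ, (((j + m + 1 : ℕ)) : ℝ≥0∞) ^ d * q (j + m) := by
  classical
  set n : (Fin d → ℤ) → ℕ := fun c => (l1 c b).toNat with hn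
  have h1 : ∑' c : Fin d → ℤ, q (n c + m)
      = ∑' j : ℕ, ∑' c : {c : Fin d → ℤ // n c = j}, q (n c.val + m) := by
    rw [← ENNReal.tsum_sigma' (fun x : Σ j : ℕ, {c : Fin d → ℤ // n c = j} =>
      q (n x.2.val + m))]
    exact ((Equiv.sigmaFiberEquiv n).tsum_eq (fun c => q (n c + m))).symm
  have h2 : ∀ j : ℕ, ∑' c : {c : Fin d → ℤ // n c = j}, q (n c.val + m)
      ≤ (((2 * j + 1) ^ d : ℕ) : ℝ≥0∞) * q (j + m) := by
    intro j
    have h2a : ∑' c : {c : Fin d → ℤ // n c = j}, q (n c.val + m)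
        = ∑' _c : {c : Fin d → ℤ // n c = j}, q (j + m) :=
      tsum_congr fun c => by rw [c.2]
    rw [h2a]
    have hinj : ∃ φ : {c : Fin d → ℤ // n c = j} → (Fin d → Fin (2 * j + 1)),
        Function.Injective φ := by
      refine ⟨fun c i => ⟨(c.val i - b i + j).toNat, ?_⟩, ?_⟩
      · obtain ⟨hb1, hb2⟩ := abs_le.1 (single_le_l1 (a := c.val) (b := b) i)
        have hc := c.2
        have hl := l1_nonneg c.val b
        simp only [hn] at hc
        omega
      · intro c c' hcc
        apply Subtype.ext
        funext i
        have := congrFun hcc i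
        rw [Fin.mk.injEq] at this
        obtain ⟨hb1, hb2⟩ := abs_le.1 (single_le_l1 (a := c.val) (b := b) i)
        obtain ⟨hb1', hb2'⟩ := abs_le.1 (single_le_l1 (a := c'.val) (b := b) i)
        have hc := c.2
        have hc' := c'.2
        simp only [hn] at hc hc'
        have hl := l1_nonneg c.val b
        have hl' := l1_nonneg c'.val b
        omega
    obtain ⟨φ, hφ⟩ := hinj
    calc ∑' _c : {c : Fin d → ℤ // n c = j}, q (j + m)
        ≤ ∑' _y : Fin d → Fin (2 * j + 1), q (j + m) :=
          Summable.tsum_le_tsum_of_inj φ hφ (fun _ _ => zero_le) (fun _ => le_rfl)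
            ENNReal.summable ENNReal.summable
      _ = (((2 * j + 1) ^ d : ℕ) : ℝ≥0∞) * q (j + m) := by
          rw [tsum_fintype]
          rw [Finset.sum_const, nsmul_eq_mul]
          congr 1
          rw [Finset.card_univ, Fintype.card_fun]
          simp
  have h3 : ∀ j : ℕ, (((2 * j + 1) ^ d : ℕ) : ℝ≥0∞) * q (j + m)
      ≤ 3 ^ d * ((((j + m + 1 : ℕ)) : ℝ≥0∞) ^ d * q (j + m)) := by
    intro j
    rw [← mul_assoc]
    refine mul_le_mul_left ?_ _
    have hnat : (2 * j + 1) ^ d ≤ 3 ^ d * (j + m + 1) ^ d := by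
      rw [← Nat.mul_pow]
      exact Nat.pow_le_pow_left (by omega) d
    calc (((2 * j + 1) ^ d : ℕ) : ℝ≥0∞) ≤ ((3 ^ d * (j + m + 1) ^ d : ℕ) : ℝ≥0∞) :=
          Nat.cast_le.2 hnat
      _ = 3 ^ d * (((j + m + 1 : ℕ)) : ℝ≥0∞) ^ d := by push_cast; ring
  calc ∑' c : Fin d → ℤ, q (n c + m)
      = ∑' j : ℕ, ∑' c : {c : Fin d → ℤ // n c = j}, q (n c.val + m) := h1
    _ ≤ ∑' j : ℕ, 3 ^ d * ((((j + m + 1 : ℕ)) : ℝ≥0∞) ^ d * q (j + m)) :=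
        ENNReal.tsum_le_tsum fun j => le_trans (h2 j) (h3 j)
    _ = 3 ^ d * ∑' j : ℕ, (((j + m + 1 : ℕ)) : ℝ≥0∞) ^ d * q (j + m) :=
        ENNReal.tsum_mul_left

end Prob
section Main
open Filter Topology
variable {d : ℕ}

lemma measure_bad_b (μ : Measure (Site d → Bool))
    (hinv : ∀ s : Site d, μ.map (shift s) = μ)
    (hsum : ∑' r : ℕ, (((r + 1 : ℕ) : ℝ≥0∞)) ^ d *
        μ {ω : Site d → Bool |
            ((r + 1 : ℕ) : ℝ≥0∞) < radius (origin d) (hill ω (origin d))} < ⊤)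
    (b : Fin d → ℤ) :
    μ {ω : Site d → Bool |
        depthPlus ((b, 0) : Site d) (mountain ω (b, 0)) = ⊤ ∨
        depthMinus ((b, 0) : Site d) (mountain ω (b, 0)) = ⊤} = 0 := by
  set q : ℕ → ℝ≥0∞ := fun r =>
    μ {ω : Site d → Bool |
        ((r + 1 : ℕ) : ℝ≥0∞) < radius (origin d) (hill ω (origin d))} with hq
  set g : ℕ → ℝ≥0∞ := fun r => ((r + 1 : ℕ) : ℝ≥0∞) ^ d * q r with hg
  have hgfin : ∑' r, g r ≠ ⊤ := by
    simp only [hg, hq]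
    exact hsum.ne
  have hbound : ∀ m : ℕ,
      μ {ω : Site d → Bool |
          depthPlus ((b, 0) : Site d) (mountain ω (b, 0)) = ⊤ ∨
          depthMinus ((b, 0) : Site d) (mountain ω (b, 0)) = ⊤}
        ≤ 3 ^ d * ∑' j : ℕ, g (j + m) := by
    intro m
    have hincl : {ω : Site d → Bool |
        depthPlus ((b, 0) : Site d) (mountain ω (b, 0)) = ⊤ ∨
        depthMinus ((b, 0) : Site d) (mountain ω (b, 0)) = ⊤}
        ⊆ ⋃ c : Fin d → ℤ, {ω : Site d → Bool |
            ((((l1 c b).toNat + m + 1 : ℕ)) : ℝ≥0∞)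
              < radius ((c, 0) : Site d) (hill ω ((c, 0) : Site d))} := by
      intro ω hω
      obtain ⟨c, hc⟩ := bad_incl ω b m hω
      exact Set.mem_iUnion.2 ⟨c, hc⟩
    refine le_trans (measure_mono hincl) (le_trans (measure_iUnion_le _) ?_)
    have heq : ∀ c : Fin d → ℤ, μ {ω : Site d → Bool |
        ((((l1 c b).toNat + m + 1 : ℕ)) : ℝ≥0∞)
          < radius ((c, 0) : Site d) (hill ω ((c, 0) : Site d))}
          = q ((l1 c b).toNat + m) :=
      fun c => measure_radius_eq μ hinv c _
    calc ∑' c : Fin d → ℤ, μ {ω : Site d → Bool |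
          ((((l1 c b).toNat + m + 1 : ℕ)) : ℝ≥0∞)
            < radius ((c, 0) : Site d) (hill ω ((c, 0) : Site d))}
        = ∑' c : Fin d → ℤ, q ((l1 c b).toNat + m) := tsum_congr heq
      _ ≤ 3 ^ d * ∑' j : ℕ, (((j + m + 1 : ℕ)) : ℝ≥0∞) ^ d * q (j + m) := counting q b m
      _ = 3 ^ d * ∑' j : ℕ, g (j + m) := rfl
  have hR := ENNReal.tendsto_sum_nat_add g hgfin
  have h3 := ENNReal.Tendsto.const_mul (a := (3 : ℝ≥0∞) ^ d) hR
    (Or.inr (ENNReal.pow_ne_top (by norm_num)))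
  rw [mul_zero] at h3
  exact le_antisymm (ge_of_tendsto' h3 hbound) zero_le

lemma good_of_finite (hd : 1 ≤ d) {ω : Site d → Bool}
    (hfin : ∀ b : Fin d → ℤ,
        depthPlus ((b, 0) : Site d) (mountain ω (b, 0)) ≠ ⊤ ∧
        depthMinus ((b, 0) : Site d) (mountain ω (b, 0)) ≠ ⊤) :
    (∀ b : Fin d → ℤ,
        depthPlus ((b, 0) : Site d) (mountain ω (b, 0)) ≠ ⊤ ∧
        depthMinus ((b, 0) : Site d) (mountain ω (b, 0)) ≠ ⊤) ∧
    (∀ b : Fin d → ℤ, ω (b, Fplus ω b) = false ∧ ω (b, Fminus ω b) = false) ∧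
    (∀ b b' : Fin d → ℤ, l1 b b' = 1 →
        |Fplus ω b - Fplus ω b'| ≤ 1 ∧ |Fminus ω b - Fminus ω b'| ≤ 1) := by
  refine ⟨hfin, fun b => ⟨Fplus_open hd (hfin b).1, Fminus_open hd (hfin b).2⟩,
    fun b b' hbb => ⟨?_, ?_⟩⟩
  · have hbb' : l1 b' b = 1 := (l1_symm b' b).trans hbb
    have h1 := Fplus_lip_one (ω := ω) (hfin b).1 (hfin b').1 hbb
    have h2 := Fplus_lip_one (ω := ω) (hfin b').1 (hfin b).1 hbb'
    rw [abs_le]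
    omega
  · have hbb' : l1 b' b = 1 := (l1_symm b' b).trans hbb
    have h1 := Fminus_lip_one (ω := ω) (hfin b).2 (hfin b').2 hbb
    have h2 := Fminus_lip_one (ω := ω) (hfin b').2 (hfin b).2 hbb'
    rw [abs_le]
    omega

end Main

end Aux

/-- Theorem 3.1 of Gracar–Stauffer. If
`∑_{r ≥ 1} r^d · μ(rad₀(H₀) > r) < ∞` for a translation-invariant probability measure `μ`,
then `μ`-a.s. the two-sided Lipschitz surface exists: all depths are finite, the sites
`(b, F₊(b))` and `(b, F₋(b))` are open, and `F₊`, `F₋` are Lipschitz. -/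
theorem lipschitz_surface_exists
    (d : ℕ) (hd : 1 ≤ d)
    (μ : Measure (Site d → Bool)) [IsProbabilityMeasure μ]
    (hinv : ∀ s : Site d, μ.map (shift s) = μ)
    (hsum : ∑' r : ℕ,
        (((r + 1 : ℕ) : ℝ≥0∞)) ^ d *
          μ {ω : Site d → Bool |
              ((r + 1 : ℕ) : ℝ≥0∞) < radius (origin d) (hill ω (origin d))} < ⊤) :
    ∀ᵐ ω ∂μ,
      (∀ b : Fin d → ℤ,
          depthPlus ((b, 0) : Site d) (mountain ω (b, 0)) ≠ ⊤ ∧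
          depthMinus ((b, 0) : Site d) (mountain ω (b, 0)) ≠ ⊤) ∧
      (∀ b : Fin d → ℤ, ω (b, Fplus ω b) = false ∧ ω (b, Fminus ω b) = false) ∧
      (∀ b b' : Fin d → ℤ, l1 b b' = 1 →
          |Fplus ω b - Fplus ω b'| ≤ 1 ∧ |Fminus ω b - Fminus ω b'| ≤ 1) := by
  have hbad : μ (⋃ b : Fin d → ℤ, {ω : Site d → Bool |
      depthPlus ((b, 0) : Site d) (mountain ω (b, 0)) = ⊤ ∨
      depthMinus ((b, 0) : Site d) (mountain ω (b, 0)) = ⊤}) = 0 := by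
    refine le_antisymm (le_trans (measure_iUnion_le _) (le_of_eq ?_)) zero_le
    calc ∑' b : Fin d → ℤ, μ {ω : Site d → Bool |
          depthPlus ((b, 0) : Site d) (mountain ω (b, 0)) = ⊤ ∨
          depthMinus ((b, 0) : Site d) (mountain ω (b, 0)) = ⊤}
        = ∑' _b : Fin d → ℤ, (0 : ℝ≥0∞) :=
          tsum_congr fun b => measure_bad_b μ hinv hsum b
      _ = 0 := tsum_zero
  rw [ae_iff]
  refine measure_mono_null ?_ hbad
  intro ω hω
  simp only [Set.mem_setOf_eq] at hω
  by_contra hnot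
  simp only [Set.mem_iUnion, Set.mem_setOf_eq] at hnot
  push_neg at hnot
  exact hω (good_of_finite hd fun b => hnot b)

end
end

section
/- For any configuration on ℤ^{d+1} in which l_v^+(M_v) and l_v^−(M_v) are finite for every v ∈ 𝕃 with M_v ≠ ∅, and any u, u' ∈ 𝕃 with ‖u − u'‖₁ = 1, one has |F_+(u) − F_+(u')| ≤ 1 and |F_−(u) − F_−(u')| ≤ 1. -/
open MeasureTheory
open scoped ENNReal

noncomputable section

namespace FLipAux

variable {d : ℕ}

lemma l1_comm (b b' : Fin d → ℤ) : l1 b b' = l1 b' b := by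
  unfold l1
  exact Finset.sum_congr rfl fun j _ => abs_sub_comm _ _

/-- A not-necessarily-injective walk version of `IsDPath`. -/
def NPath (ω : Site d → Bool) (u v : Site d) : Prop :=
  u.2 = 0 ∧ ω u = true ∧ ∃ (k : ℕ) (p : ℕ → Site d),
    p 0 = u ∧ p k = v ∧ ∀ i < k, DStep ω (p i) (p (i+1))

lemma isDPath_of_walk (ω : Site d → Bool) (u : Site d)
    (hu0 : u.2 = 0) (huω : ω u = true) :
    ∀ (k : ℕ) (v : Site d) (p : ℕ → Site d), p 0 = u → p k = v →
      (∀ i < k, DStep ω (p i) (p (i+1))) → IsDPath ω u v := by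
  intro k
  induction k using Nat.strong_induction_on with
  | _ k ih =>
    intro v p h0 hk hstep
    by_cases hdup : ∃ i j, i < j ∧ j ≤ k ∧ p i = p j
    · obtain ⟨i, j, hij, hjk, heq⟩ := hdup
      rcases hjk.lt_or_eq with hjk' | rfl
      · -- splice out the loop between i and j
        set m := j - i with hm
        have hm1 : 1 ≤ m := by omega
        set q : ℕ → Site d := fun n => if n < i then p n else p (n + m) with hq
        have hqlow : ∀ n, n ≤ i → q n = p n := by
          intro n hn
          rcases lt_or_eq_of_le hn with h | h
          · simp [hq, h]
          · subst h
            simp only [hq, lt_irrefl, if_neg (lt_irrefl n)]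
            rw [show n + m = j by omega, ← heq]
        have hqhigh : ∀ n, i ≤ n → q n = p (n + m) := by
          intro n hn
          simp [hq, not_lt.mpr hn]
        refine ih (k - m) (by omega) v q ?_ ?_ ?_
        · rw [hqlow 0 (by omega)]; exact h0
        · rw [hqhigh (k - m) (by omega), show k - m + m = k by omega]; exact hk
        · intro n hn
          rcases lt_or_ge n i with hni | hni
          · rw [hqlow n hni.le, hqlow (n+1) (by omega)]
            exact hstep n (by omega)
          · rw [hqhigh n hni, hqhigh (n+1) (by omega), show n + 1 + m = n + m + 1 by omega]
            exact hstep (n + m) (by omega)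
      · -- j = k : truncate
        exact ih i hij v p h0 (heq.trans hk) (fun n hn => hstep n (by omega))
    · push_neg at hdup
      refine ⟨hu0, huω, k, fun i : Fin (k+1) => p i.val, ?_, ?_, ?_, ?_⟩
      · intro a c hac
        by_contra hne
        rcases lt_or_gt_of_ne (Fin.val_ne_of_ne hne) with h | h
        · exact hdup a.val c.val h (by omega) hac
        · exact hdup c.val a.val h (by omega) hac.symm
      · simpa using h0
      · simpa using hk
      · intro i
        simpa using hstep i.val i.isLt

lemma npath_of_isDPath {ω : Site d → Bool} {u v : Site d}
    (h : IsDPath ω u v) : NPath ω u v := by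
  obtain ⟨hu0, huω, k, p, _, h0, hl, hs⟩ := h
  refine ⟨hu0, huω, k, fun n => p ⟨min n k, by omega⟩, ?_, ?_, ?_⟩
  · simpa using h0
  · show p ⟨min k k, by omega⟩ = v
    have he : (⟨min k k, by omega⟩ : Fin (k+1)) = Fin.last k := by
      ext; simp [Fin.last]
    rw [he]; exact hl
  · intro i hi
    have e1 : (⟨min i k, by omega⟩ : Fin (k+1)) = (⟨i, hi⟩ : Fin k).castSucc := by
      ext; simp [Fin.castSucc]; omega
    have e2 : (⟨min (i+1) k, by omega⟩ : Fin (k+1)) = (⟨i, hi⟩ : Fin k).succ := by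
      ext; simp [Fin.succ]; omega
    show DStep ω (p ⟨min i k, by omega⟩) (p ⟨min (i+1) k, by omega⟩)
    rw [e1, e2]
    exact hs ⟨i, hi⟩

lemma npath_extend {ω : Site d → Bool} {u v w : Site d}
    (h : NPath ω u v) (hs : DStep ω v w) : NPath ω u w := by
  obtain ⟨hu0, huω, k, p, h0, hk, hstep⟩ := h
  refine ⟨hu0, huω, k+1, fun n => if n ≤ k then p n else w, ?_, ?_, ?_⟩
  · simp [h0]
  · simp
  · intro i hi
    rcases lt_or_eq_of_le (Nat.lt_succ_iff.mp hi) with h | h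
    · simp only [if_pos h.le, if_pos (by omega : i+1 ≤ k)]
      exact hstep i h
    · subst h
      simp only [if_pos le_rfl, if_neg (by omega : ¬ i+1 ≤ i)]
      rw [hk]; exact hs

lemma reaches_iff {ω : Site d → Bool} {u v : Site d} :
    reaches ω u v ↔ ∃ w ∈ hatSet v, NPath ω u w := by
  constructor
  · rintro ⟨w, hw, hp⟩
    exact ⟨w, hw, npath_of_isDPath hp⟩
  · rintro ⟨w, hw, hu0, huω, k, p, h0, hk, hs⟩
    exact ⟨w, hw, isDPath_of_walk ω u hu0 huω k w p h0 hk hs⟩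

lemma key_plus (ω : Site d → Bool) (b b' : Fin d → ℤ) (hbb' : l1 b' b = 1)
    (l : ℕ) (hl : 1 ≤ l)
    (hm : ((b, (l:ℤ)) : Site d) ∈ mountain ω ((b, 0) : Site d)) :
    ((b', (l:ℤ) - 1) : Site d) ∈ mountain ω ((b', 0) : Site d) := by
  obtain ⟨w0, hw00, _, hw⟩ := hm
  rw [hill, Set.mem_setOf_eq, reaches_iff] at hw
  obtain ⟨w, hwmem, hpath⟩ := hw
  obtain ⟨hwb, hwsign, hwabs⟩ := hwmem
  have hl' : (0:ℤ) < l := by exact_mod_cast hl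
  have hwsign' : (0:ℤ) ≤ (l:ℤ) * w.2 := hwsign
  have hwabs' : |(l:ℤ)| ≤ |w.2| := hwabs
  have hw2 : (0:ℤ) ≤ w.2 := by nlinarith
  have h2 : (l:ℤ) ≤ w.2 := by
    rwa [abs_of_nonneg hl'.le, abs_of_nonneg hw2] at hwabs'
  have hstep : DStep ω w ((b', w.2 - 1) : Site d) := by
    right
    refine ⟨by rw [show ((b', w.2 - 1) : Site d).1 = b' from rfl, hwb]; exact hbb', ?_, by omega⟩
    show w.2 - (w.2 - 1) ∈ signSet w.2
    rw [show w.2 - (w.2 - 1) = 1 by ring]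
    simp [signSet, show (0:ℤ) < w.2 by omega]
  have hp2 : NPath ω w0 ((b', w.2 - 1) : Site d) := npath_extend hpath hstep
  refine ⟨w0, hw00, ?_, ?_⟩
  · rw [hill, Set.mem_setOf_eq, reaches_iff]
    refine ⟨(b', w.2 - 1), ⟨rfl, ?_, ?_⟩, hp2⟩
    · simp
    · simp
  · rw [hill, Set.mem_setOf_eq, reaches_iff]
    refine ⟨(b', w.2 - 1), ⟨rfl, ?_, ?_⟩, hp2⟩
    · show (0:ℤ) ≤ ((l:ℤ) - 1) * (w.2 - 1)
      have h3 : (0:ℤ) ≤ (l:ℤ) - 1 := by omega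
      have h4 : (0:ℤ) ≤ w.2 - 1 := by omega
      exact mul_nonneg h3 h4
    · show |(l:ℤ) - 1| ≤ |w.2 - 1|
      rw [abs_of_nonneg (by omega : (0:ℤ) ≤ (l:ℤ) - 1),
        abs_of_nonneg (by omega : (0:ℤ) ≤ w.2 - 1)]
      omega

lemma key_minus (ω : Site d → Bool) (b b' : Fin d → ℤ) (hbb' : l1 b' b = 1)
    (l : ℕ) (hl : 1 ≤ l)
    (hm : ((b, -(l:ℤ)) : Site d) ∈ mountain ω ((b, 0) : Site d)) :
    ((b', -((l:ℤ) - 1)) : Site d) ∈ mountain ω ((b', 0) : Site d) := by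
  obtain ⟨w0, hw00, _, hw⟩ := hm
  rw [hill, Set.mem_setOf_eq, reaches_iff] at hw
  obtain ⟨w, hwmem, hpath⟩ := hw
  obtain ⟨hwb, hwsign, hwabs⟩ := hwmem
  have hl' : (0:ℤ) < l := by exact_mod_cast hl
  have hwsign' : (0:ℤ) ≤ -(l:ℤ) * w.2 := hwsign
  have hwabs' : |-(l:ℤ)| ≤ |w.2| := hwabs
  have hw2 : w.2 ≤ 0 := by nlinarith
  have h2 : w.2 ≤ -(l:ℤ) := by
    rw [abs_of_nonpos (by omega : -(l:ℤ) ≤ 0), abs_of_nonpos hw2] at hwabs'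
    omega
  have hstep : DStep ω w ((b', w.2 + 1) : Site d) := by
    right
    refine ⟨by rw [show ((b', w.2 + 1) : Site d).1 = b' from rfl, hwb]; exact hbb', ?_, by omega⟩
    show w.2 - (w.2 + 1) ∈ signSet w.2
    rw [show w.2 - (w.2 + 1) = -1 by ring]
    simp [signSet, show ¬ (0:ℤ) < w.2 by omega, show w.2 < 0 by omega]
  have hp2 : NPath ω w0 ((b', w.2 + 1) : Site d) := npath_extend hpath hstep
  refine ⟨w0, hw00, ?_, ?_⟩
  · rw [hill, Set.mem_setOf_eq, reaches_iff]
    refine ⟨(b', w.2 + 1), ⟨rfl, ?_, ?_⟩, hp2⟩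
    · simp
    · simp
  · rw [hill, Set.mem_setOf_eq, reaches_iff]
    refine ⟨(b', w.2 + 1), ⟨rfl, ?_, ?_⟩, hp2⟩
    · show (0:ℤ) ≤ -((l:ℤ) - 1) * (w.2 + 1)
      have h3 : -((l:ℤ) - 1) ≤ 0 := by omega
      have h4 : w.2 + 1 ≤ 0 := by omega
      nlinarith [mul_nonneg (neg_nonneg.mpr h3) (neg_nonneg.mpr h4)]
    · show |-((l:ℤ) - 1)| ≤ |w.2 + 1|
      rw [abs_of_nonpos (by omega : -((l:ℤ) - 1) ≤ 0),
        abs_of_nonpos (by omega : w.2 + 1 ≤ 0)]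
      omega

lemma mem_self_of_nonempty {ω : Site d → Bool} {b : Fin d → ℤ}
    (h : (mountain ω ((b, 0) : Site d)).Nonempty) :
    ((b, 0) : Site d) ∈ mountain ω ((b, 0) : Site d) := by
  obtain ⟨x, u0, h0, hv, _⟩ := h
  exact ⟨u0, h0, hv, hv⟩

lemma depthPlus_ge {u : Site d} {S : Set (Site d)} {k : ℕ}
    (hk : ((u.1, u.2 + (k:ℤ)) : Site d) ∈ S) :
    (k : ℕ∞) ≤ depthPlus u S :=
  le_iSup₂ (f := fun (k : ℕ) (_ : k ∈ {k : ℕ | ((u.1, u.2 + (k:ℤ)) : Site d) ∈ S}) => (k : ℕ∞)) k hk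

lemma depthMinus_ge {u : Site d} {S : Set (Site d)} {k : ℕ}
    (hk : ((u.1, u.2 - (k:ℤ)) : Site d) ∈ S) :
    (k : ℕ∞) ≤ depthMinus u S :=
  le_iSup₂ (f := fun (k : ℕ) (_ : k ∈ {k : ℕ | ((u.1, u.2 - (k:ℤ)) : Site d) ∈ S}) => (k : ℕ∞)) k hk

lemma depthPlus_attained {u : Site d} {S : Set (Site d)}
    (hne : ((u.1, u.2 + ((0:ℕ):ℤ)) : Site d) ∈ S) (hfin : depthPlus u S ≠ ⊤) :
    ((u.1, u.2 + (((depthPlus u S).toNat : ℕ) : ℤ)) : Site d) ∈ S := by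
  set n := (depthPlus u S).toNat with hn
  have hcoe : (n : ℕ∞) = depthPlus u S := ENat.coe_toNat hfin
  by_contra hcon
  have hub : ∀ k : ℕ, ((u.1, u.2 + (k:ℤ)) : Site d) ∈ S → k ≤ n := by
    intro k hk
    have h1 := depthPlus_ge hk
    rw [← hcoe] at h1
    exact_mod_cast h1
  rcases Nat.eq_zero_or_pos n with h0 | h0
  · rw [h0] at hcon; exact hcon hne
  · have hle : depthPlus u S ≤ ((n-1 : ℕ) : ℕ∞) := by
      rw [depthPlus]
      refine iSup₂_le ?_
      intro k hk
      have h1 := hub k hk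
      have h2 : k ≠ n := fun h => hcon (h ▸ hk)
      exact_mod_cast (by omega : k ≤ n - 1)
    rw [← hcoe] at hle
    have : n ≤ n - 1 := by exact_mod_cast hle
    omega

lemma depthMinus_attained {u : Site d} {S : Set (Site d)}
    (hne : ((u.1, u.2 - ((0:ℕ):ℤ)) : Site d) ∈ S) (hfin : depthMinus u S ≠ ⊤) :
    ((u.1, u.2 - (((depthMinus u S).toNat : ℕ) : ℤ)) : Site d) ∈ S := by
  set n := (depthMinus u S).toNat with hn
  have hcoe : (n : ℕ∞) = depthMinus u S := ENat.coe_toNat hfin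
  by_contra hcon
  have hub : ∀ k : ℕ, ((u.1, u.2 - (k:ℤ)) : Site d) ∈ S → k ≤ n := by
    intro k hk
    have h1 := depthMinus_ge hk
    rw [← hcoe] at h1
    exact_mod_cast h1
  rcases Nat.eq_zero_or_pos n with h0 | h0
  · rw [h0] at hcon; exact hcon hne
  · have hle : depthMinus u S ≤ ((n-1 : ℕ) : ℕ∞) := by
      rw [depthMinus]
      refine iSup₂_le ?_
      intro k hk
      have h1 := hub k hk
      have h2 : k ≠ n := fun h => hcon (h ▸ hk)
      exact_mod_cast (by omega : k ≤ n - 1)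
    rw [← hcoe] at hle
    have : n ≤ n - 1 := by exact_mod_cast hle
    omega

lemma fplus_nonneg (ω : Site d → Bool) (b : Fin d → ℤ) : 0 ≤ Fplus ω b := by
  rw [Fplus]
  split
  · positivity
  · exact le_refl 0

lemma fminus_nonpos (ω : Site d → Bool) (b : Fin d → ℤ) : Fminus ω b ≤ 0 := by
  rw [Fminus]
  split
  · have : (0:ℤ) ≤ ((depthMinus ((b, 0) : Site d) (mountain ω (b, 0))).toNat : ℤ) :=
      Int.ofNat_nonneg _
    omega
  · exact le_refl 0

lemma fplus_one_sided (ω : Site d → Bool) (b b' : Fin d → ℤ) (hbb' : l1 b' b = 1)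
    (hfb : (mountain ω ((b, 0) : Site d)).Nonempty →
      depthPlus ((b, 0) : Site d) (mountain ω ((b, 0) : Site d)) ≠ ⊤)
    (hfb' : (mountain ω ((b', 0) : Site d)).Nonempty →
      depthPlus ((b', 0) : Site d) (mountain ω ((b', 0) : Site d)) ≠ ⊤) :
    Fplus ω b ≤ Fplus ω b' + 1 := by
  by_cases hne : (mountain ω ((b, 0) : Site d)).Nonempty
  · set n := (depthPlus ((b, 0) : Site d) (mountain ω ((b, 0) : Site d))).toNat with hn
    have hFb : Fplus ω b = 1 + (n : ℤ) := by rw [Fplus, if_pos hne]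
    rcases Nat.eq_zero_or_pos n with h0 | h0
    · rw [hFb, h0]
      have := fplus_nonneg ω b'
      push_cast
      omega
    · have hmem0 : ((b, 0) : Site d) ∈ mountain ω ((b, 0) : Site d) := mem_self_of_nonempty hne
      have hmem : ((b, (n:ℤ)) : Site d) ∈ mountain ω ((b, 0) : Site d) := by
        have h1 := depthPlus_attained (u := ((b, 0) : Site d))
          (S := mountain ω ((b, 0) : Site d)) (by simpa using hmem0) (hfb hne)
        simpa using h1
      have hkey := key_plus ω b b' hbb' n h0 hmem
      have hne' : (mountain ω ((b', 0) : Site d)).Nonempty := ⟨_, hkey⟩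
      set n' := (depthPlus ((b', 0) : Site d) (mountain ω ((b', 0) : Site d))).toNat with hn'
      have hFb' : Fplus ω b' = 1 + (n' : ℤ) := by rw [Fplus, if_pos hne']
      have hmem' : ((((b', 0) : Site d)).1, (((b', 0) : Site d)).2 + (((n-1 : ℕ)):ℤ)) ∈
          mountain ω ((b', 0) : Site d) := by
        have hc : (((n-1 : ℕ)):ℤ) = (n:ℤ) - 1 := by omega
        show ((b', 0 + (((n-1 : ℕ)):ℤ)) : Site d) ∈ mountain ω ((b', 0) : Site d)
        rw [hc]
        simpa using hkey
      have hle : ((n-1 : ℕ) : ℕ∞) ≤ depthPlus ((b', 0) : Site d) (mountain ω ((b', 0) : Site d)) :=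
        depthPlus_ge hmem'
      rw [← ENat.coe_toNat (hfb' hne'), ← hn'] at hle
      have h2 : n - 1 ≤ n' := by exact_mod_cast hle
      rw [hFb, hFb']
      push_cast
      omega
  · rw [Fplus, if_neg hne]
    have := fplus_nonneg ω b'
    omega

lemma fminus_one_sided (ω : Site d → Bool) (b b' : Fin d → ℤ) (hbb' : l1 b' b = 1)
    (hfb : (mountain ω ((b, 0) : Site d)).Nonempty →
      depthMinus ((b, 0) : Site d) (mountain ω ((b, 0) : Site d)) ≠ ⊤)
    (hfb' : (mountain ω ((b', 0) : Site d)).Nonempty →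
      depthMinus ((b', 0) : Site d) (mountain ω ((b', 0) : Site d)) ≠ ⊤) :
    Fminus ω b' - 1 ≤ Fminus ω b := by
  by_cases hne : (mountain ω ((b, 0) : Site d)).Nonempty
  · set n := (depthMinus ((b, 0) : Site d) (mountain ω ((b, 0) : Site d))).toNat with hn
    have hFb : Fminus ω b = -1 - (n : ℤ) := by rw [Fminus, if_pos hne]
    rcases Nat.eq_zero_or_pos n with h0 | h0
    · rw [hFb, h0]
      have := fminus_nonpos ω b'
      push_cast
      omega
    · have hmem0 : ((b, 0) : Site d) ∈ mountain ω ((b, 0) : Site d) := mem_self_of_nonempty hne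
      have hmem : ((b, -(n:ℤ)) : Site d) ∈ mountain ω ((b, 0) : Site d) := by
        have h1 := depthMinus_attained (u := ((b, 0) : Site d))
          (S := mountain ω ((b, 0) : Site d)) (by simpa using hmem0) (hfb hne)
        have he : ((0:ℤ) - ((n:ℕ):ℤ)) = -(n:ℤ) := by omega
        simpa [he] using h1
      have hkey := key_minus ω b b' hbb' n h0 hmem
      have hne' : (mountain ω ((b', 0) : Site d)).Nonempty := ⟨_, hkey⟩
      set n' := (depthMinus ((b', 0) : Site d) (mountain ω ((b', 0) : Site d))).toNat with hn'
      have hFb' : Fminus ω b' = -1 - (n' : ℤ) := by rw [Fminus, if_pos hne']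
      have hmem' : ((((b', 0) : Site d)).1, (((b', 0) : Site d)).2 - (((n-1 : ℕ)):ℤ)) ∈
          mountain ω ((b', 0) : Site d) := by
        have hc : ((0:ℤ) - (((n-1 : ℕ)):ℤ)) = -((n:ℤ) - 1) := by omega
        show ((b', 0 - (((n-1 : ℕ)):ℤ)) : Site d) ∈ mountain ω ((b', 0) : Site d)
        rw [hc]
        exact hkey
      have hle : ((n-1 : ℕ) : ℕ∞) ≤
          depthMinus ((b', 0) : Site d) (mountain ω ((b', 0) : Site d)) :=
        depthMinus_ge hmem'
      rw [← ENat.coe_toNat (hfb' hne'), ← hn'] at hle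
      have h2 : n - 1 ≤ n' := by exact_mod_cast hle
      rw [hFb, hFb']
      push_cast
      omega
  · have hFb : Fminus ω b = 0 := by rw [Fminus]; exact if_neg hne
    rw [hFb]
    have := fminus_nonpos ω b'
    omega

end FLipAux

/-- If all depths of nonempty mountains are finite, then `F₊` and `F₋`
are Lipschitz functions of the base. -/
theorem F_is_lipschitz
    (d : ℕ) (hd : 1 ≤ d) (ω : Site d → Bool)
    (hfin : ∀ b : Fin d → ℤ, (mountain ω (b, 0)).Nonempty →
      depthPlus ((b, 0) : Site d) (mountain ω (b, 0)) ≠ ⊤ ∧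
      depthMinus ((b, 0) : Site d) (mountain ω (b, 0)) ≠ ⊤)
    (b b' : Fin d → ℤ) (hbb' : l1 b b' = 1) :
    |Fplus ω b - Fplus ω b'| ≤ 1 ∧ |Fminus ω b - Fminus ω b'| ≤ 1 := by
  have hbb'' : l1 b' b = 1 := by rw [← FLipAux.l1_comm]; exact hbb'
  have h1 := FLipAux.fplus_one_sided ω b b' hbb''
    (fun h => (hfin b h).1) (fun h => (hfin b' h).1)
  have h2 := FLipAux.fplus_one_sided ω b' b hbb'
    (fun h => (hfin b' h).1) (fun h => (hfin b h).1)
  have h3 := FLipAux.fminus_one_sided ω b b' hbb''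
    (fun h => (hfin b h).2) (fun h => (hfin b' h).2)
  have h4 := FLipAux.fminus_one_sided ω b' b hbb'
    (fun h => (hfin b' h).2) (fun h => (hfin b h).2)
  constructor
  · rw [abs_le]; constructor <;> linarith
  · rw [abs_le]; constructor <;> linarith

end
end

section
/- For any cell (k,i,τ) (k ≥ 1, i ∈ ℤ^d, τ ∈ ℤ) and any descendant (k',i',τ') of (k,i,τ), one has R_{k'}(i',τ') ⊆ R_k^{sup}(i,τ); moreover, for every (i'',τ'') such that the cell (k',i'',τ'') is adjacent to (k',i',τ') (i.e. ‖i''−i'‖_∞ ≤ 1 and |τ''−τ'| ≤ 1), one also has R_{k'}(i'',τ'') ⊆ R_k^{sup}(i,τ). -/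
noncomputable section

/-- The axis-parallel cube `∏_j [i_j L, (i_j + 1) L] ⊆ ℝ^d`. -/
def cube (d : ℕ) (L : ℝ) (i : Fin d → ℤ) : Set (Fin d → ℝ) :=
  {x | ∀ j, (i j : ℝ) * L ≤ x j ∧ x j ≤ ((i j : ℝ) + 1) * L}

/-- The spatial scales: `ℓ_0 = ℓ / m` and `ℓ_k = m^{k-1} (k!)^a ℓ` for `k ≥ 1`. -/
def ell (m a : ℕ) (ℓ : ℝ) : ℕ → ℝ
  | 0 => ℓ / m
  | k + 1 => (m : ℝ) ^ k * ((Nat.factorial (k + 1) : ℕ) : ℝ) ^ a * ℓ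

/-- The time scales: `β_k = C_mix ℓ_{k-1}² k^{8/Θ} ε^{-4/Θ}`. -/
def beta (m a : ℕ) (ℓ Cmix Θ ε : ℝ) (k : ℕ) : ℝ :=
  Cmix * ell m a ℓ (k - 1) ^ 2 * (k : ℝ) ^ ((8 : ℝ) / Θ) * ε ^ (-(4 : ℝ) / Θ)

/-- The cube `S_k(i)` of scale `k`. -/
def Scell (d : ℕ) (L : ℕ → ℝ) (k : ℕ) (i : Fin d → ℤ) : Set (Fin d → ℝ) :=
  cube d (L k) i

/-- The time interval `T_k(τ) = [τ β_k, (τ+1) β_k)`. -/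
def Tcell (β : ℕ → ℝ) (k : ℕ) (τ : ℤ) : Set ℝ :=
  Set.Ico ((τ : ℝ) * β k) (((τ : ℝ) + 1) * β k)

/-- The space-time cell `R_k(i, τ)`. -/
def Rcell (d : ℕ) (L β : ℕ → ℝ) (k : ℕ) (i : Fin d → ℤ) (τ : ℤ) :
    Set ((Fin d → ℝ) × ℝ) :=
  (Scell d L k i) ×ˢ (Tcell β k τ)

/-- The area of influence `S_k^{inf}(i) = ∪_{‖i'-i‖_∞ ≤ 2ηmn(k+1)^a} S_k(i')`. -/
def Sinf (d η m n a : ℕ) (L : ℕ → ℝ) (k : ℕ) (i : Fin d → ℤ) : Set (Fin d → ℝ) :=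
  ⋃ i' ∈ {i' : Fin d → ℤ |
      ∀ j, |i' j - i j| ≤ ((2 * η * m * n * (k + 1) ^ a : ℕ) : ℤ)},
    cube d (L k) i'

/-- The spatial support `S_k^{sup}(i) = ∪_{‖i'-π_k(i)‖_∞ ≤ m} S_{k+1}(i')`. -/
def Ssup (d m : ℕ) (L : ℕ → ℝ) (π : ℕ → (Fin d → ℤ) → (Fin d → ℤ)) (k : ℕ)
    (i : Fin d → ℤ) : Set (Fin d → ℝ) :=
  ⋃ i' ∈ {i' : Fin d → ℤ | ∀ j, |i' j - π k i j| ≤ (m : ℤ)},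
    cube d (L (k + 1)) i'

/-- The time of influence `T_k^{inf}(τ)`. -/
def Tinf (η : ℕ) (β : ℕ → ℝ) (γ : ℕ → ℤ → ℤ) (k : ℕ) (τ : ℤ) : Set ℝ :=
  if k = 1 then Set.Icc ((γ 1 τ : ℝ) * β 2) (((τ : ℝ) + max (η : ℝ) 2) * β 1)
  else Set.Icc ((γ k τ : ℝ) * β (k + 1)) (((τ : ℝ) + 2) * β k)

/-- The time support `T_k^{sup}(τ) = ∪_{j=0}^{8} T_{k+1}(γ_k(τ) - 3 + j)`. -/
def Tsup (β : ℕ → ℝ) (γ : ℕ → ℤ → ℤ) (k : ℕ) (τ : ℤ) : Set ℝ :=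
  ⋃ j ∈ Finset.range 9, Tcell β (k + 1) (γ k τ - 3 + (j : ℤ))

/-- The region of influence `R_k^{inf}(i, τ)`. -/
def Rinf (d η m n a : ℕ) (L β : ℕ → ℝ) (γ : ℕ → ℤ → ℤ) (k : ℕ) (i : Fin d → ℤ)
    (τ : ℤ) : Set ((Fin d → ℝ) × ℝ) :=
  (Sinf d η m n a L k i) ×ˢ (Tinf η β γ k τ)

/-- The support `R_k^{sup}(i, τ)`. -/
def Rsup (d m : ℕ) (L β : ℕ → ℝ) (π : ℕ → (Fin d → ℤ) → (Fin d → ℤ))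
    (γ : ℕ → ℤ → ℤ) (k : ℕ) (i : Fin d → ℤ) (τ : ℤ) : Set ((Fin d → ℝ) × ℝ) :=
  (Ssup d m L π k i) ×ˢ (Tsup β γ k τ)

/-- Iteration of a scale-indexed family of maps: `iterUp f k j` applies
`f k`, then `f (k+1)`, …, then `f (k+j-1)`. -/
def iterUp {X : Type*} (f : ℕ → X → X) : ℕ → ℕ → X → X
  | _, 0, x => x
  | k, j + 1, x => iterUp f (k + 1) j (f k x)



section Aux

lemma ell_pos {m a : ℕ} {ℓ : ℝ} (hm : 1 ≤ m) (hℓ : 0 < ℓ) (k : ℕ) :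
    0 < ell m a ℓ k := by
  have hm' : (0:ℝ) < m := by exact_mod_cast hm
  cases k with
  | zero => exact div_pos hℓ hm'
  | succ k =>
    simp only [ell]
    have hf : (0:ℝ) < ((Nat.factorial (k+1) : ℕ) : ℝ) := by
      exact_mod_cast Nat.factorial_pos (k+1)
    exact mul_pos (mul_pos (pow_pos hm' k) (pow_pos hf a)) hℓ

lemma seven_ell_le {m a : ℕ} {ℓ : ℝ} (hm : 7 ≤ m) (hℓ : 0 < ℓ) (k : ℕ) :
    7 * ell m a ℓ k ≤ ell m a ℓ (k + 1) := by
  have hm' : (7:ℝ) ≤ m := by exact_mod_cast hm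
  have hm0 : (0:ℝ) < m := by linarith
  cases k with
  | zero =>
    have hfact : ((Nat.factorial (0+1) : ℕ):ℝ) = 1 := by norm_num [Nat.factorial]
    simp only [ell, pow_zero, hfact, one_pow, one_mul]
    rw [mul_div_assoc', div_le_iff₀ hm0]
    nlinarith
  | succ k =>
    simp only [ell]
    have hf1 : (0:ℝ) ≤ ((Nat.factorial (k+1) : ℕ) : ℝ) := by positivity
    have hfle : ((Nat.factorial (k+1) : ℕ):ℝ) ≤ ((Nat.factorial (k+2) : ℕ):ℝ) := by
      exact_mod_cast Nat.factorial_le (by omega)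
    calc 7 * ((m:ℝ) ^ k * ((Nat.factorial (k+1) : ℕ):ℝ) ^ a * ℓ)
        = (m:ℝ) ^ k * 7 * ((Nat.factorial (k+1) : ℕ):ℝ) ^ a * ℓ := by ring
      _ ≤ (m:ℝ) ^ k * (m:ℝ) * ((Nat.factorial (k+2) : ℕ):ℝ) ^ a * ℓ := by
          gcongr
      _ = (m:ℝ) ^ (k+1) * ((Nat.factorial (k+2) : ℕ):ℝ) ^ a * ℓ := by
          rw [pow_succ]

lemma ell_mono {m a : ℕ} {ℓ : ℝ} (hm : 7 ≤ m) (hℓ : 0 < ℓ) :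
    Monotone (ell m a ℓ) := by
  apply monotone_nat_of_le_succ
  intro k
  have h7 := seven_ell_le (a := a) (ℓ := ℓ) hm hℓ k
  have hp := ell_pos (m := m) (a := a) (ℓ := ℓ) (by omega) hℓ k
  linarith

lemma beta_pos {m a : ℕ} {ℓ Cmix Θ ε : ℝ} (hm : 1 ≤ m) (hℓ : 0 < ℓ)
    (hC : 0 < Cmix) (hε : 0 < ε) {k : ℕ} (hk : 1 ≤ k) :
    0 < beta m a ℓ Cmix Θ ε k := by
  unfold beta
  have h1 : (0:ℝ) < (k:ℝ) := by exact_mod_cast hk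
  exact mul_pos (mul_pos (mul_pos hC (pow_pos (ell_pos hm hℓ _) 2))
    (Real.rpow_pos_of_pos h1 _)) (Real.rpow_pos_of_pos hε _)

lemma beta_three {m a : ℕ} {ℓ Cmix Θ ε : ℝ} (hm : 7 ≤ m) (hℓ : 0 < ℓ)
    (hC : 0 < Cmix) (hε : 0 < ε) (hΘ : 0 < Θ) {k : ℕ} (hk : 1 ≤ k) :
    3 * beta m a ℓ Cmix Θ ε k ≤ beta m a ℓ Cmix Θ ε (k + 1) := by
  obtain ⟨k, rfl⟩ : ∃ j, k = j + 1 := ⟨k - 1, by omega⟩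
  unfold beta
  simp only [Nat.add_sub_cancel]
  set e := ell m a ℓ k with he_def
  set E := ell m a ℓ (k+1) with hE_def
  have he : 0 < e := ell_pos (by omega) hℓ k
  have hE7 : 7 * e ≤ E := seven_ell_le hm hℓ k
  set r1 : ℝ := ((k+1 : ℕ):ℝ) ^ ((8:ℝ)/Θ) with hr1_def
  set r2 : ℝ := ((k+1+1 : ℕ):ℝ) ^ ((8:ℝ)/Θ) with hr2_def
  have hr1 : 0 < r1 := Real.rpow_pos_of_pos (by positivity) _
  have hr12 : r1 ≤ r2 := by
    apply Real.rpow_le_rpow (by positivity) (by exact_mod_cast Nat.le_succ _)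
    positivity
  have hre : 0 < ε ^ (-(4:ℝ)/Θ) := Real.rpow_pos_of_pos hε _
  have hE2 : 49 * e^2 ≤ E^2 := by nlinarith
  have key : 3 * (e^2 * r1) ≤ E^2 * r2 := by
    have h49 : 49 * e^2 * r1 ≤ E^2 * r2 :=
      mul_le_mul hE2 hr12 hr1.le (by positivity)
    nlinarith [mul_pos (pow_pos he 2) hr1]
  calc 3 * (Cmix * e ^ 2 * r1 * ε ^ (-(4:ℝ)/Θ))
      = (Cmix * ε ^ (-(4:ℝ)/Θ)) * (3 * (e^2 * r1)) := by ring
    _ ≤ (Cmix * ε ^ (-(4:ℝ)/Θ)) * (E^2 * r2) := by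
        apply mul_le_mul_of_nonneg_left key (by positivity)
    _ = Cmix * E ^ 2 * r2 * ε ^ (-(4:ℝ)/Θ) := by ring

lemma scell_chain (d : ℕ) (L : ℕ → ℝ) (π : ℕ → (Fin d → ℤ) → (Fin d → ℤ))
    (hπ : ∀ k, 1 ≤ k → ∀ i, Scell d L k i ⊆ Scell d L (k+1) (π k i)) :
    ∀ jn k' (i' : Fin d → ℤ), 1 ≤ k' →
      Scell d L k' i' ⊆ Scell d L (k' + jn) (iterUp π k' jn i') := by
  intro jn
  induction jn with
  | zero => intro k' i' _; simp [iterUp]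
  | succ j ih =>
    intro k' i' hk'
    have harith : k' + (j+1) = (k'+1) + j := by omega
    rw [show iterUp π k' (j+1) i' = iterUp π (k'+1) j (π k' i') from rfl, harith]
    exact (hπ k' hk' i').trans (ih (k'+1) (π k' i') (by omega))

lemma time_chain (β : ℕ → ℝ) (γ : ℕ → ℤ → ℤ)
    (hβ3 : ∀ k, 1 ≤ k → 3 * β k ≤ β (k+1))
    (hβpos : ∀ k, 1 ≤ k → 0 < β k)
    (hγ : ∀ k, 1 ≤ k → ∀ τ : ℤ, (τ:ℝ) * β k ∈ Tcell β (k+1) (γ k τ + 1)) :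
    ∀ jn k' (τ' : ℤ), 1 ≤ k' →
      ((iterUp γ k' jn τ' : ℤ) : ℝ) * β (k' + jn) ≤ (τ':ℝ) * β k' ∧
      (τ':ℝ) * β k' + 3 * β k' ≤
        ((iterUp γ k' jn τ' : ℤ) : ℝ) * β (k' + jn) + 3 * β (k' + jn) := by
  intro jn
  induction jn with
  | zero => intro k' τ' _; simp [iterUp]
  | succ j ih =>
    intro k' τ' hk'
    have hγ' := hγ k' hk' τ'
    simp only [Tcell, Set.mem_Ico] at hγ'
    push_cast at hγ'
    obtain ⟨h1, h2⟩ := hγ'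
    obtain ⟨ih1, ih2⟩ := ih (k'+1) (γ k' τ') (by omega)
    have harith : k' + (j+1) = (k'+1) + j := by omega
    rw [show iterUp γ k' (j+1) τ' = iterUp γ (k'+1) j (γ k' τ') from rfl, harith]
    have h3 := hβ3 k' hk'
    have hp := hβpos (k'+1) (by omega)
    have hp' := hβpos k' hk'
    constructor
    · nlinarith
    · nlinarith

end Aux

set_option maxHeartbeats 1000000 in
/-- Lemma 4.4 of Gracar–Stauffer. With `m = 7 η n^d`, the space-time cell of
any descendant `(k', i', τ')` of a cell `(k, i, τ)` is contained in the support
`R_k^{sup}(i, τ)`; moreover the same holds for every cell of scale `k'` adjacent to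
`(k', i', τ')`. Here `π` and `γ` are the (unique) parent maps of the tessellations. -/
theorem descendant_in_support
    (d η n a : ℕ) (hd : 1 ≤ d) (hη : 1 ≤ η) (hn : 1 ≤ n) (ha : 1 ≤ a)
    (Θ ℓ ε Cmix : ℝ)
    (hΘ : ∃ p : ℕ, 1 ≤ p ∧ Θ = 1 / (p : ℝ))
    (haΘ : 1 < 2 * (a : ℝ) - 8 / Θ)
    (hℓ : 0 < ℓ) (hε0 : 0 < ε) (hε1 : ε < 1) (hC : 0 < Cmix)
    (π : ℕ → (Fin d → ℤ) → (Fin d → ℤ)) (γ : ℕ → ℤ → ℤ)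
    (hπ : ∀ k, 1 ≤ k → ∀ i : Fin d → ℤ,
      Scell d (ell (7 * η * n ^ d) a ℓ) k i ⊆
        Scell d (ell (7 * η * n ^ d) a ℓ) (k + 1) (π k i))
    (hγ : ∀ k, 1 ≤ k → ∀ τ : ℤ,
      (τ : ℝ) * beta (7 * η * n ^ d) a ℓ Cmix Θ ε k ∈
        Tcell (beta (7 * η * n ^ d) a ℓ Cmix Θ ε) (k + 1) (γ k τ + 1))
    (k k' : ℕ) (i i' : Fin d → ℤ) (τ τ' : ℤ)
    (hk' : 1 ≤ k') (hkk : k' ≤ k)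
    (hdesc : iterUp π k' (k - k') i' = i ∧ iterUp γ k' (k - k') τ' = τ) :
    Rcell d (ell (7 * η * n ^ d) a ℓ) (beta (7 * η * n ^ d) a ℓ Cmix Θ ε) k' i' τ' ⊆
      Rsup d (7 * η * n ^ d) (ell (7 * η * n ^ d) a ℓ)
        (beta (7 * η * n ^ d) a ℓ Cmix Θ ε) π γ k i τ ∧
    ∀ (i'' : Fin d → ℤ) (τ'' : ℤ),
      (∀ j, |i'' j - i' j| ≤ 1) → |τ'' - τ'| ≤ 1 →
      Rcell d (ell (7 * η * n ^ d) a ℓ) (beta (7 * η * n ^ d) a ℓ Cmix Θ ε) k' i'' τ'' ⊆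
        Rsup d (7 * η * n ^ d) (ell (7 * η * n ^ d) a ℓ)
          (beta (7 * η * n ^ d) a ℓ Cmix Θ ε) π γ k i τ := by
  obtain ⟨hdi, hdt⟩ := hdesc
  obtain ⟨p0, hp0, hpΘ⟩ := hΘ
  have hΘpos : 0 < Θ := by
    rw [hpΘ]
    have : (0:ℝ) < (p0:ℝ) := by exact_mod_cast hp0
    positivity
  set m : ℕ := 7 * η * n ^ d with hm_def
  have hm7 : 7 ≤ m := by
    have h1 : 1 ≤ n ^ d := Nat.one_le_pow _ _ hn
    calc 7 = 7 * 1 * 1 := by ring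
      _ ≤ 7 * η * n ^ d := by gcongr
  set L := ell m a ℓ with hL_def
  set B := beta m a ℓ Cmix Θ ε with hB_def
  have hk1 : 1 ≤ k := le_trans hk' hkk
  have hBpos : ∀ j, 1 ≤ j → 0 < B j := fun j hj =>
    beta_pos (by omega) hℓ hC hε0 hj
  have hB3 : ∀ j, 1 ≤ j → 3 * B j ≤ B (j+1) := fun j hj =>
    beta_three hm7 hℓ hC hε0 hΘpos hj
  have hBstep : ∀ j, 1 ≤ j → B j ≤ B (j+1) := by
    intro j hj
    have := hB3 j hj
    have := hBpos j hj
    linarith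
  have hBmono : ∀ j j', 1 ≤ j → j ≤ j' → B j ≤ B j' := by
    intro j j' hj hjj
    obtain ⟨c, rfl⟩ : ∃ c, j' = j + c := ⟨j' - j, by omega⟩
    induction c with
    | zero => simp
    | succ c ihc =>
      have h1 : B j ≤ B (j + c) := ihc (by omega)
      have h2 : B (j + c) ≤ B (j + c + 1) := hBstep _ (by omega)
      calc B j ≤ B (j + c) := h1
        _ ≤ B (j + (c+1)) := by rw [show j + (c+1) = j + c + 1 from by omega]; exact h2
  have hLpos : ∀ j, 0 < L j := fun j => ell_pos (by omega) hℓ j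
  have hLmono : ∀ j j', j ≤ j' → L j ≤ L j' := fun _ _ h => ell_mono hm7 hℓ h
  -- spatial chain
  have hSchain : Scell d L k' i' ⊆ Scell d L k i := by
    have h := scell_chain d L π hπ (k - k') k' i' hk'
    rw [show k' + (k - k') = k from by omega, hdi] at h
    exact h
  set p := π k i with hp_def
  have hπk : Scell d L k i ⊆ Scell d L (k+1) p := hπ k hk1 i
  have hcornerL : ∀ j, (p j : ℝ) * L (k+1) ≤ (i' j : ℝ) * L k' := by
    have hc : (fun j => (i' j : ℝ) * L k') ∈ Scell d L k' i' := by
      simp only [Scell, cube, Set.mem_setOf_eq]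
      intro j
      refine ⟨le_rfl, ?_⟩
      nlinarith [hLpos k']
    have hc' := hπk (hSchain hc)
    simp only [Scell, cube, Set.mem_setOf_eq] at hc'
    intro j; exact (hc' j).1
  have hcornerU : ∀ j, ((i' j : ℝ) + 1) * L k' ≤ ((p j : ℝ) + 1) * L (k+1) := by
    have hc : (fun j => ((i' j : ℝ) + 1) * L k') ∈ Scell d L k' i' := by
      simp only [Scell, cube, Set.mem_setOf_eq]
      intro j
      refine ⟨?_, le_rfl⟩
      nlinarith [hLpos k']
    have hc' := hπk (hSchain hc)
    simp only [Scell, cube, Set.mem_setOf_eq] at hc'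
    intro j; exact (hc' j).2
  -- temporal chain
  have htchain := time_chain B γ hB3 hBpos hγ (k - k') k' τ' hk'
  rw [show k' + (k - k') = k from by omega, hdt] at htchain
  obtain ⟨ht1, ht2⟩ := htchain
  set g := γ k τ with hg_def
  have hγk := hγ k hk1 τ
  simp only [Tcell, Set.mem_Ico] at hγk
  push_cast at hγk
  obtain ⟨hg1, hg2⟩ := hγk
  have key : ∀ (i'' : Fin d → ℤ) (τ'' : ℤ),
      (∀ j, |i'' j - i' j| ≤ 1) → |τ'' - τ'| ≤ 1 →
      Rcell d L B k' i'' τ'' ⊆ Rsup d m L B π γ k i τ := by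
    intro i'' τ'' hi'' hτ''
    rintro ⟨x, t⟩ hxt
    obtain ⟨hx, ht⟩ := hxt
    simp only [Scell, cube, Set.mem_setOf_eq] at hx
    simp only [Tcell, Set.mem_Ico] at ht
    obtain ⟨htl, htu⟩ := ht
    constructor
    · -- spatial part
      have hxj : ∀ j, ((p j : ℝ) - 1) * L (k+1) ≤ x j ∧
          x j ≤ ((p j : ℝ) + 2) * L (k+1) := by
        intro j
        obtain ⟨hxl, hxu⟩ := hx j
        obtain ⟨ha1, ha2⟩ := abs_le.mp (hi'' j)
        have hc1 : (i' j : ℝ) - 1 ≤ (i'' j : ℝ) := by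
          have : (i' j : ℤ) - 1 ≤ i'' j := by omega
          exact_mod_cast this
        have hc2 : (i'' j : ℝ) ≤ (i' j : ℝ) + 1 := by
          have : (i'' j : ℤ) ≤ i' j + 1 := by omega
          exact_mod_cast this
        have hL' : L k' ≤ L (k+1) := hLmono _ _ (by omega)
        have hLp := hLpos k'
        have h1 := hcornerL j
        have h2 := hcornerU j
        constructor
        · nlinarith [mul_le_mul_of_nonneg_right hc1 hLp.le]
        · nlinarith [mul_le_mul_of_nonneg_right hc2 hLp.le]
      refine Set.mem_iUnion₂.mpr
        ⟨fun j => if x j < (p j : ℝ) * L (k+1) then p j - 1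
          else if x j ≤ ((p j : ℝ) + 1) * L (k+1) then p j else p j + 1, ?_, ?_⟩
      · simp only [Set.mem_setOf_eq]
        intro j
        have hm7' : (7:ℤ) ≤ (m:ℤ) := by exact_mod_cast hm7
        split_ifs <;> simp [← hp_def] <;> omega
      · simp only [cube, Set.mem_setOf_eq]
        intro j
        obtain ⟨hl, hu⟩ := hxj j
        split_ifs with h1 h2 <;> push_cast <;> constructor <;> linarith
    · -- temporal part
      obtain ⟨hb1, hb2⟩ := abs_le.mp hτ''
      have hτc1 : (τ' : ℝ) - 1 ≤ (τ'' : ℝ) := by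
        have : (τ' : ℤ) - 1 ≤ τ'' := by omega
        exact_mod_cast this
      have hτc2 : (τ'' : ℝ) ≤ (τ' : ℝ) + 1 := by
        have : (τ'' : ℤ) ≤ τ' + 1 := by omega
        exact_mod_cast this
      have hBk' := hBpos k' hk'
      have hBk1 := hBpos (k+1) (by omega)
      have hBm1 : B k' ≤ B (k+1) := hBmono _ _ hk' (by omega)
      have hBm2 : B k ≤ B (k+1) := hBmono _ _ hk1 (by omega)
      have hlow : ((g:ℝ) - 3) * B (k+1) ≤ t := by
        nlinarith [mul_le_mul_of_nonneg_right hτc1 hBk'.le]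
      have hhigh : t < ((g:ℝ) + 6) * B (k+1) := by
        nlinarith [mul_le_mul_of_nonneg_right hτc2 hBk'.le]
      set q : ℤ := ⌊t / B (k+1)⌋ with hq_def
      have hql : (q:ℝ) * B (k+1) ≤ t := by
        have hfl := Int.floor_le (t / B (k+1))
        calc (q:ℝ) * B (k+1) ≤ (t / B (k+1)) * B (k+1) :=
              mul_le_mul_of_nonneg_right hfl hBk1.le
          _ = t := div_mul_cancel₀ t hBk1.ne'
      have hqu : t < ((q:ℝ) + 1) * B (k+1) := by
        have hfl := Int.lt_floor_add_one (t / B (k+1))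
        calc t = (t / B (k+1)) * B (k+1) := (div_mul_cancel₀ t hBk1.ne').symm
          _ < ((q:ℝ) + 1) * B (k+1) := by
              apply mul_lt_mul_of_pos_right hfl hBk1
      have hq1 : g - 3 ≤ q := by
        have hr : ((g:ℝ) - 3) < (q:ℝ) + 1 := by nlinarith
        have : (g:ℤ) - 3 < q + 1 := by exact_mod_cast hr
        omega
      have hq2 : q ≤ g + 5 := by
        have hr : (q:ℝ) < (g:ℝ) + 6 := by nlinarith
        have : (q:ℤ) < g + 6 := by exact_mod_cast hr
        omega
      refine Set.mem_iUnion₂.mpr ⟨(q - (g - 3)).toNat, ?_, ?_⟩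
      · simp only [Finset.mem_range]
        omega
      · have hcast : g - 3 + ((q - (g - 3)).toNat : ℤ) = q := by omega
        rw [hcast]
        simp only [Tcell, Set.mem_Ico]
        exact ⟨hql, hqu⟩
  exact ⟨key i' τ' (fun j => by simp) (by simp), key⟩


end
end

section
/- Let ω be a configuration on ℤ^{d+1} and let b₁,…,b_n ∈ ℤ^d satisfy ‖b_i − b_{i+1}‖₁ = 1 for 1 ≤ i < n and M_{(b_i,0)} ≠ ∅ for all 1 ≤ i ≤ n (equivalently F_+((b_i,0)) ≠ 0). Then there exist closed sites u₁,…,u_k ∈ 𝕃 with k ≤ n whose hills H_{u_1},…,H_{u_k} are nonempty, such that every (b_ℓ,0), 1 ≤ ℓ ≤ n, is contained in some H_{u_j}, and, provided k ≥ 2, for every i ∈ {1,…,k} there exists j ≠ i such that H_{u_i} and H_{u_j} intersect or are adjacent. -/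
open MeasureTheory
open scoped ENNReal

noncomputable section

/-- Two distinct sites are adjacent when `‖u - v‖_∞ = 1`. -/
def adjSite {d : ℕ} (u v : Site d) : Prop :=
  u ≠ v ∧ (∀ j, |u.1 j - v.1 j| ≤ 1) ∧ |u.2 - v.2| ≤ 1

/-- A diagonal sequence from `u` to `w`: consecutive bases at `ℓ¹`-distance 1, heights moving
towards the zero-height hyperplane according to `Sign`, all heights of the same sign. -/
def DiagSeq {d : ℕ} (u w : Site d) : Prop :=
  ∃ (n : ℕ) (p : Fin (n + 1) → Site d), p 0 = u ∧ p (Fin.last n) = w ∧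
    (∀ i : Fin n, l1 (p i.succ).1 (p i.castSucc).1 = 1 ∧
      ((p i.castSucc).2 - (p i.succ).2) ∈ signSet (p i.castSucc).2) ∧
    (∀ i j : Fin (n + 1), 0 ≤ (p i).2 * (p j).2)

/-- `u` is diagonally connected to `v`: some diagonal sequence from `u` ends at a site that is
adjacent to `v` or equal to `v`. -/
def DiagConn {d : ℕ} (u v : Site d) : Prop :=
  ∃ w : Site d, DiagSeq u w ∧ (adjSite w v ∨ w = v)

/-- `u` is diagonally linked to `v`: a diagonal sequence from `u` ends exactly at `v`. -/
def DiagLinked {d : ℕ} (u v : Site d) : Prop := DiagSeq u v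

/-- Single diagonal connection (symmetric). -/
def SingleDiag {d : ℕ} (u v : Site d) : Prop := DiagConn u v ∨ DiagConn v u

/-- Double diagonal connection: there is `w` to which both `u` and `v` are diagonally
connected, and `w` is diagonally linked to `u` or to `v`. -/
def DoubleDiag {d : ℕ} (u v : Site d) : Prop :=
  ∃ w : Site d, DiagConn u w ∧ DiagConn v w ∧ (DiagLinked w u ∨ DiagLinked w v)

/-- One step of a DD-path. -/
def DDStep {d : ℕ} (u v : Site d) : Prop := adjSite u v ∨ SingleDiag u v ∨ DoubleDiag u v

/-- A DD-path as a sequence: distinct sites, consecutive ones adjacent, single diagonally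
connected or double diagonally connected. -/
def DDSeq {d : ℕ} {n : ℕ} (p : Fin (n + 1) → Site d) : Prop :=
  Function.Injective p ∧ ∀ i : Fin n, DDStep (p i.castSucc) (p i.succ)

/-- There is a DD-path from `u` to `v`. -/
def IsDDPath {d : ℕ} (u v : Site d) : Prop :=
  ∃ (n : ℕ) (p : Fin (n + 1) → Site d), DDSeq p ∧ p 0 = u ∧ p (Fin.last n) = v

/-- Two hills intersect or are adjacent. -/
def hillsTouch {d : ℕ} (ω : Site d → Bool) (u v : Site d) : Prop :=
  (hill ω u ∩ hill ω v).Nonempty ∨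
  ∃ x ∈ hill ω u, ∃ y ∈ hill ω v, dist1 x y = 1

/-- Lemma 7.4 of Gracar–Stauffer. Along a nearest-neighbour path of bases
whose mountains are all nonempty, there exists a covering family of at most `n` nonempty hills,
each of which (when there are at least two) intersects or is adjacent to another one. -/
theorem sequence_of_hills
    (d : ℕ) (hd : 1 ≤ d) (ω : Site d → Bool)
    (n : ℕ) (hn : 1 ≤ n) (b : ℕ → Fin d → ℤ)
    (hadj : ∀ i, i + 1 < n → l1 (b i) (b (i + 1)) = 1)
    (hmt : ∀ i < n, (mountain ω ((b i, 0) : Site d)).Nonempty) :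
    ∃ (k : ℕ) (u : ℕ → Site d), k ≤ n ∧
      (∀ i < k, (u i).2 = 0 ∧ ω (u i) = true ∧ (hill ω (u i)).Nonempty) ∧
      (∀ l < n, ∃ j < k, ((b l, 0) : Site d) ∈ hill ω (u j)) ∧
      (2 ≤ k → ∀ i < k, ∃ j < k, j ≠ i ∧ hillsTouch ω (u i) (u j)) := by
  have l1_symm : ∀ (a c : Fin d → ℤ), l1 a c = l1 c a := by
    intro a c
    unfold l1
    exact Finset.sum_congr rfl (fun j _ => abs_sub_comm _ _)
  have H : ∀ i, i < n → ∃ u : Site d, u.2 = 0 ∧ ((b i, 0) : Site d) ∈ hill ω u := by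
    intro i hi
    obtain ⟨w, u, hu0, hbu, _⟩ := hmt i hi
    exact ⟨u, hu0, hbu⟩
  choose! u hu0 hmem using H
  have hdist : ∀ i j : ℕ, l1 (b i) (b j) = 1 →
      dist1 ((b i, 0) : Site d) ((b j, 0) : Site d) = 1 := by
    intro i j h
    simp [dist1, h]
  refine ⟨n, u, le_refl n, ?_, ?_, ?_⟩
  · intro i hi
    have hm := hmem i hi
    obtain ⟨w, -, -, hωu, -⟩ := hm
    exact ⟨hu0 i hi, hωu, ⟨_, hmem i hi⟩⟩
  · intro l hl
    exact ⟨l, hl, hmem l hl⟩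
  · intro hk i hi
    rcases lt_or_ge (i + 1) n with h | h
    · refine ⟨i + 1, h, Nat.succ_ne_self i, Or.inr ?_⟩
      exact ⟨(b i, 0), hmem i hi, (b (i + 1), 0), hmem (i + 1) h,
        hdist i (i + 1) (hadj i h)⟩
    · have hi1 : 1 ≤ i := by omega
      refine ⟨i - 1, by omega, by omega, Or.inr ?_⟩
      have hadj' : l1 (b (i - 1)) (b i) = 1 := by
        have := hadj (i - 1) (by omega)
        rwa [Nat.sub_add_cancel hi1] at this
      exact ⟨(b i, 0), hmem i hi, (b (i - 1), 0), hmem (i - 1) (by omega),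
        hdist i (i - 1) (by rw [l1_symm]; exact hadj')⟩

end
end
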